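/- arXiv:2011.04699 — 4 statements merged into one kernel-verified Lean document; each statement's English description precedes it below -/
import Mathlib

section
/- For all a, b ∈ 𝔹_n and all x ∈ 𝔹_n, e^{−d(a,b)} ≤ [x,a]/[x,b] ≤ e^{d(a,b)}, where d is the hyperbolic metric on 𝔹_n. -/
noncomputable section

open MeasureTheory Real Set Filter Topology Pointwise
open scoped RealInnerProductSpace ENNReal

namespace HLTV

abbrev E (n : ℕ) : Type := EuclideanSpace ℝ (Fin n)

/-- The open unit ball of `ℝ^n`. -/
def Ball (n : ℕ) : Set (E n) := Metric.ball 0 1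

/-- Lebesgue measure on the unit ball, normalized so that the ball has measure one. -/
def V (n : ℕ) : Measure (E n) :=
  (volume (Metric.ball (0 : E n) 1))⁻¹ • (volume.restrict (Metric.ball (0 : E n) 1))

/-- The standard weight `w(x) = 1 - |x|²`. -/
def w {n : ℕ} (x : E n) : ℝ := 1 - ‖x‖ ^ 2

/-- The normalizing constant `c(n,λ)`. -/
def cnl (n : ℕ) (l : ℝ) : ℝ :=
  2 / (n : ℝ) * Real.Gamma ((n : ℝ) / 2 + l + 1) /
    (Real.Gamma ((n : ℝ) / 2) * Real.Gamma (l + 1))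

/-- The weighted measure `dV_λ = c(n,λ) w^λ dV`. -/
def Vl (n : ℕ) (l : ℝ) : Measure (E n) :=
  (V n).withDensity fun x => ENNReal.ofReal (cnl n l * w x ^ l)

/-- A (complex-valued) function is harmonic on `s` if it is `C²` there and its Laplacian
vanishes. -/
def HarmonicOn {n : ℕ} (f : E n → ℂ) (s : Set (E n)) : Prop :=
  ContDiffOn ℝ 2 f s ∧
    ∀ x ∈ s,
      (∑ i : Fin n,
        fderiv ℝ (fun y => fderiv ℝ f y (EuclideanSpace.single i (1 : ℝ))) x
          (EuclideanSpace.single i (1 : ℝ))) = 0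

/-- Membership in the weighted harmonic Bergman space `b^p_λ`. -/
def MemBergman (n : ℕ) (l p : ℝ) (f : E n → ℂ) : Prop :=
  HarmonicOn f (Ball n) ∧ MemLp f (ENNReal.ofReal p) (Vl n l)

/-- The norm `‖·‖_{p,λ}` (as an extended nonnegative real). -/
def lpNorm (n : ℕ) (l p : ℝ) (f : E n → ℂ) : ℝ≥0∞ :=
  eLpNorm f (ENNReal.ofReal p) (Vl n l)

/-- The integral operator with kernel `R`. -/
def Pker (n : ℕ) (l : ℝ) (R : E n → E n → ℝ) (f : E n → ℂ) : E n → ℂ :=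
  fun x => ∫ y, f y * (R x y : ℂ) ∂(Vl n l)

/-- `R` is the reproducing (Bergman projection) kernel for `b²_λ`:  the associated integral
operator is bounded on compacts, and it is the orthogonal projection of `L²_λ` onto the
harmonic Bergman space `b²_λ`. -/
def IsBergmanKernel (n : ℕ) (l : ℝ) (R : E n → E n → ℝ) : Prop :=
  Measurable (Function.uncurry R) ∧
  (∀ K : Set (E n), K ⊆ Ball n → IsCompact K →
    ∃ M : ℝ, ∀ x ∈ K, ∀ y ∈ Ball n, |R x y| ≤ M) ∧
  ∀ f : E n → ℂ, MemLp f 2 (Vl n l) →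
    MemBergman n l 2 (Pker n l R f) ∧
    ∀ g : E n → ℂ, MemBergman n l 2 g →
      ∫ x, (f x - Pker n l R f x) * (starRingEnd ℂ) (g x) ∂(Vl n l) = 0

/-! ### Möbius transformations -/

/-- The bracket `[x,y] = (1 - 2 x·y + |x|²|y|²)^{1/2}`. -/
def br {n : ℕ} (x y : E n) : ℝ := Real.sqrt (1 - 2 * (inner ℝ x y : ℝ) + ‖x‖ ^ 2 * ‖y‖ ^ 2)

/-- The Möbius transformation `φ_a`. -/
def mob {n : ℕ} (a x : E n) : E n :=
  ((br x a) ^ 2)⁻¹ • (‖x - a‖ ^ 2 • a - (1 - ‖a‖ ^ 2) • (x - a))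

/-- The hyperbolic (Poincaré) distance on the ball. -/
def hypd {n : ℕ} (a b : E n) : ℝ := Real.log ((1 + ‖mob a b‖) / (1 - ‖mob a b‖))

/-! ### Spherical coordinates and the spherical-box decomposition -/

def i0 (n : ℕ) (hn : 2 ≤ n) : Fin n := ⟨0, by omega⟩
def i1 (n : ℕ) (hn : 2 ≤ n) : Fin n := ⟨1, by omega⟩
def ilast (n : ℕ) (hn : 2 ≤ n) : Fin n := ⟨n - 1, by omega⟩

/-- The spherical coordinate map `σ : ℚ_n → 𝔹_n`. -/
def sph (n : ℕ) (hn : 2 ≤ n) (γ : Fin n → ℝ) : E n := WithLp.toLp 2 fun i =>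
  γ (i0 n hn) *
    (∏ j ∈ Finset.univ.filter (fun j : Fin n => 1 ≤ j.val ∧ j.val ≤ i.val),
      Real.sin (γ j)) *
    (if h : i.val + 1 < n then Real.cos (γ ⟨i.val + 1, h⟩) else 1)

/-- The parameter box `ℚ_n = [0,1) × [0,π]^{n-2} × [0,2π]`. -/
def QQn (n : ℕ) (hn : 2 ≤ n) : Set (Fin n → ℝ) :=
  {γ | γ (i0 n hn) ∈ Ico (0 : ℝ) 1 ∧
    (∀ i : Fin n, 1 ≤ i.val → i.val ≤ n - 2 → γ i ∈ Icc 0 π) ∧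
    γ (ilast n hn) ∈ Icc 0 (2 * π)}

/-- The Jacobian determinant of the spherical coordinate map. -/
def Jsig (n : ℕ) (hn : 2 ≤ n) (γ : Fin n → ℝ) : ℝ :=
  γ (i0 n hn) ^ (n - 1) *
    ∏ j ∈ Finset.univ.filter (fun j : Fin n => 1 ≤ j.val ∧ j.val ≤ n - 2),
      Real.sin (γ j) ^ (n - 1 - j.val)

/-- For `x, y ∈ ℚ_n`, the box `Q(x,y) ⊆ ℚ_n` spanned by `x` and `y`. -/
def Qxy (n : ℕ) (hn : 2 ≤ n) (x y : Fin n → ℝ) : Set (Fin n → ℝ) :=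
  QQn n hn ∩ {z | ∀ i, z i ∈ Icc (min (x i) (y i)) (max (x i) (y i))}

/-- The spherical box `B(x,y) = σ(Q(x,y))`. -/
def Bxy (n : ℕ) (hn : 2 ≤ n) (x y : Fin n → ℝ) : Set (E n) :=
  sph n hn '' Qxy n hn x y

/-- The index data of the dyadic spherical boxes:  an index vector
`k = (m, k₂, …, k_n)` with `0 ≤ k_n ≤ … ≤ k₂ ≤ 2^m - 1` together with a pattern of
reflections `θ_j ↦ π - θ_j` applied in the coordinates `j = 2, …, n-1`. -/
structure BoxIndex (n : ℕ) (hn : 2 ≤ n) where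
  k : Fin n → ℕ
  refl : Fin n → Bool
  antitone : ∀ i j : Fin n, 1 ≤ i.val → i ≤ j → k j ≤ k i
  le_top : k (i1 n hn) ≤ 2 ^ (k (i0 n hn)) - 1
  refl_first : refl (i0 n hn) = false
  refl_last : refl (ilast n hn) = false

/-- The generation `m` of a dyadic box. -/
def gen {n : ℕ} {hn : 2 ≤ n} (b : BoxIndex n hn) : ℕ := b.k (i0 n hn)

def den (n : ℕ) (hn : 2 ≤ n) (k : Fin n → ℕ) (i : Fin n) : ℝ :=
  if i.val = 1 then (2 : ℝ) ^ (k (i0 n hn))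
  else (k ⟨i.val - 1, by have := i.isLt; omega⟩ : ℝ) + 1

def coeff (n : ℕ) (i : Fin n) : ℝ := if i.val = n - 1 then 2 * π else π / 2

/-- Left endpoints of the defining intervals of the (unreflected) box `C_k`. -/
def lo (n : ℕ) (hn : 2 ≤ n) (k : Fin n → ℕ) (i : Fin n) : ℝ :=
  if i.val = 0 then 1 - ((2 : ℝ) ^ (k i))⁻¹
  else coeff n i * (k i : ℝ) / den n hn k i

/-- Right endpoints of the defining intervals of the (unreflected) box `C_k`. -/
def hi (n : ℕ) (hn : 2 ≤ n) (k : Fin n → ℕ) (i : Fin n) : ℝ :=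
  if i.val = 0 then 1 - ((2 : ℝ) ^ (k i + 1))⁻¹
  else coeff n i * ((k i : ℝ) + 1) / den n hn k i

/-- The defining interval of the box `Q_j` in coordinate `i` (taking the reflections
into account). -/
def ivl {n : ℕ} {hn : 2 ≤ n} (b : BoxIndex n hn) (i : Fin n) : Set ℝ :=
  if b.refl i then Icc (π - hi n hn b.k i) (π - lo n hn b.k i)
  else Icc (lo n hn b.k i) (hi n hn b.k i)

/-- The box `Q_j ⊆ ℚ_n`. -/
def Qbox {n : ℕ} {hn : 2 ≤ n} (b : BoxIndex n hn) : Set (Fin n → ℝ) :=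
  {γ | ∀ i, γ i ∈ ivl b i}

/-- The dyadic spherical box `B_j = σ(Q_j) ⊆ 𝔹_n`. -/
def Bbox {n : ℕ} {hn : 2 ≤ n} (b : BoxIndex n hn) : Set (E n) :=
  sph n hn '' Qbox b

/-- The enlarged box `B_j^* = B_j + 2^{-m-2}𝔹_n`. -/
def Bstar {n : ℕ} {hn : 2 ≤ n} (b : BoxIndex n hn) : Set (E n) :=
  Bbox b + Metric.ball (0 : E n) (((2 : ℝ) ^ (gen b + 2))⁻¹)

/-- The smallest corner `x^{(j)}` of `Q_j` with respect to the order (2.2). -/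
def xcorner {n : ℕ} {hn : 2 ≤ n} (b : BoxIndex n hn) : Fin n → ℝ :=
  fun i => if b.refl i then π - lo n hn b.k i else lo n hn b.k i

/-- The largest corner `y^{(j)}` of `Q_j` with respect to the order (2.2). -/
def ycorner {n : ℕ} {hn : 2 ≤ n} (b : BoxIndex n hn) : Fin n → ℝ :=
  fun i => if b.refl i then π - hi n hn b.k i else hi n hn b.k i

/-- `|∫_{B(x^{(j)},y)} ψ dV_λ|` for `y = σ(γ)`, `γ ∈ Q_j`. -/
def boxIntegral (n : ℕ) (hn : 2 ≤ n) (l : ℝ) (ψ : E n → ℂ) (b : BoxIndex n hn)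
    (γ : Fin n → ℝ) : ℝ :=
  ‖∫ x in Bxy n hn (xcorner b) γ, ψ x ∂(Vl n l)‖

/-- `ψ̂_j = sup_{y ∈ B_j} |∫_{B(x^{(j)},y)} ψ dV_λ|`. -/
def psiHat (n : ℕ) (hn : 2 ≤ n) (l : ℝ) (ψ : E n → ℂ) (b : BoxIndex n hn) : ℝ :=
  sSup (boxIntegral n hn l ψ b '' Qbox b)

/-- The weighted volume `|B_j|_λ`. -/
def wVol (n : ℕ) (hn : 2 ≤ n) (l : ℝ) (b : BoxIndex n hn) : ℝ :=
  ((Vl n l) (Bbox b)).toReal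

/-- The weak Carleson condition `ψ̂_j ≤ C_ψ |B_j|_λ` for all `j`. -/
def WeakCarleson (n : ℕ) (hn : 2 ≤ n) (l : ℝ) (ψ : E n → ℂ) (C : ℝ) : Prop :=
  ∀ b : BoxIndex n hn, ∀ γ ∈ Qbox b, boxIntegral n hn l ψ b γ ≤ C * wVol n hn l b

/-- One term `T_ψ(χ_{B_j} f) = P_λ(ψ χ_{B_j} f)` of the series defining the generalized
Toeplitz operator. -/
def Tterm (n : ℕ) (hn : 2 ≤ n) (l : ℝ) (R : E n → E n → ℝ) (ψ f : E n → ℂ)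
    (b : BoxIndex n hn) : E n → ℂ :=
  Pker n l R ((Bbox b).indicator fun y => ψ y * f y)

/-- The generalized Toeplitz operator `T_ψ f = Σ_j P_λ(ψ χ_{B_j} f)`. -/
def Tgen (n : ℕ) (hn : 2 ≤ n) (l : ℝ) (R : E n → E n → ℝ) (ψ f : E n → ℂ) : E n → ℂ :=
  fun x => ∑' b : BoxIndex n hn, Tterm n hn l R ψ f b x

/-- Truncation `ψ_ρ` of a symbol. -/
def cut {n : ℕ} (ρ : ℝ) (ψ : E n → ℂ) : E n → ℂ := fun z => if ‖z‖ ≤ ρ then ψ z else 0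

/-! ### Derivatives -/

/-- Partial derivative in the `i`-th Cartesian coordinate. -/
def pderivE {n : ℕ} {F : Type} [NormedAddCommGroup F] [NormedSpace ℝ F] (i : Fin n)
    (f : E n → F) : E n → F :=
  fun x => fderiv ℝ f x (EuclideanSpace.single i (1 : ℝ))

/-- The iterated Cartesian partial derivative `D^α`. -/
def Dmulti {n : ℕ} {F : Type} [NormedAddCommGroup F] [NormedSpace ℝ F] (α : Fin n → ℕ)
    (f : E n → F) : E n → F :=
  (List.finRange n).foldr (fun i g => (pderivE i)^[α i] g) f

/-- Partial derivative in the `i`-th spherical coordinate. -/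
def pderivPi {n : ℕ} {F : Type} [NormedAddCommGroup F] [NormedSpace ℝ F] (i : Fin n)
    (G : (Fin n → ℝ) → F) : (Fin n → ℝ) → F :=
  fun γ => fderiv ℝ G γ (Pi.single i (1 : ℝ))

/-- The iterated spherical-coordinate partial derivative `D^α_γ`. -/
def DmultiPi {n : ℕ} {F : Type} [NormedAddCommGroup F] [NormedSpace ℝ F] (α : Fin n → ℕ)
    (G : (Fin n → ℝ) → F) : (Fin n → ℝ) → F :=
  (List.finRange n).foldr (fun i h => (pderivPi i)^[α i] h) G

/-- The multi-index `α ∈ {0,1}^n` associated to a boolean vector. -/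
def natOf {n : ℕ} (α : Fin n → Bool) : Fin n → ℕ := fun i => if α i then 1 else 0

/-- The "surface" measure on the face `Q_α(x,y)`: Lebesgue measure in the coordinates with
`α_k = 1` (restricted to the corresponding interval), Dirac measure at `y_k` in the
coordinates with `α_k = 0`. -/
def bdryMeasure (n : ℕ) (α : Fin n → Bool) (x y : Fin n → ℝ) : Measure (Fin n → ℝ) :=
  Measure.pi fun i =>
    if α i then (volume : Measure ℝ).restrict (Icc (min (x i) (y i)) (max (x i) (y i)))
    else Measure.dirac (y i)

/-- The function `c_β` of Lemma 5.2. -/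
def cbeta {n : ℕ} (α : Fin n → Bool) (β : Fin n → ℕ) (γ : Fin n → ℝ) : ℝ :=
  ∏ j ∈ Finset.univ.filter (fun j : Fin n => 1 ≤ j.val ∧ j.val ≤ n - 2),
    Real.sin (γ j) ^
      ((∑ i, β i) - ∑ i ∈ Finset.univ.filter (fun i : Fin n => i.val ≤ j.val), natOf α i)

/-! ### The analytic (holomorphic) setting on `𝔹_{2n} = 𝐁_n ⊆ ℂ^n` -/

/-- Identification of `ℂ^n` with `ℝ^{2n}`. -/
def toCx (n : ℕ) (z : Fin n → ℂ) : E (2 * n) := WithLp.toLp 2 fun i =>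
  if i.val % 2 = 0 then (z ⟨i.val / 2, by have := i.isLt; omega⟩).re
  else (z ⟨i.val / 2, by have := i.isLt; omega⟩).im

/-- `f : 𝔹_{2n} → ℂ` is holomorphic as a function of `n` complex variables. -/
def HolOn (n : ℕ) (f : E (2 * n) → ℂ) : Prop :=
  DifferentiableOn ℂ (fun z : Fin n → ℂ => f (toCx n z)) {z | toCx n z ∈ Ball (2 * n)}

/-- Membership in the weighted (analytic) Bergman space `A^p_λ(𝐁_n)`. -/
def MemBergmanA (n : ℕ) (l p : ℝ) (f : E (2 * n) → ℂ) : Prop :=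
  HolOn n f ∧ MemLp f (ENNReal.ofReal p) (Vl (2 * n) l)

/-- The integral operator with (complex) kernel `K` on the ball `𝔹_{2n}`. -/
def PkerC (n : ℕ) (l : ℝ) (K : E n → E n → ℂ) (f : E n → ℂ) : E n → ℂ :=
  fun x => ∫ y, f y * K x y ∂(Vl n l)

/-- `K` is the Bergman projection kernel for `A²_λ(𝐁_n)`. -/
def IsBergmanKernelA (n : ℕ) (l : ℝ) (K : E (2 * n) → E (2 * n) → ℂ) : Prop :=
  Measurable (Function.uncurry K) ∧
  (∀ S : Set (E (2 * n)), S ⊆ Ball (2 * n) → IsCompact S →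
    ∃ M : ℝ, ∀ x ∈ S, ∀ y ∈ Ball (2 * n), ‖K x y‖ ≤ M) ∧
  ∀ f : E (2 * n) → ℂ, MemLp f 2 (Vl (2 * n) l) →
    MemBergmanA n l 2 (PkerC (2 * n) l K f) ∧
    ∀ g : E (2 * n) → ℂ, MemBergmanA n l 2 g →
      ∫ x, (f x - PkerC (2 * n) l K f x) * (starRingEnd ℂ) (g x) ∂(Vl (2 * n) l) = 0

/-- One term of the series defining the generalized analytic Toeplitz operator. -/
def TtermA (n : ℕ) (hn : 2 ≤ 2 * n) (l : ℝ) (K : E (2 * n) → E (2 * n) → ℂ)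
    (ψ f : E (2 * n) → ℂ) (b : BoxIndex (2 * n) hn) : E (2 * n) → ℂ :=
  PkerC (2 * n) l K ((Bbox b).indicator fun y => ψ y * f y)

/-- The generalized analytic Toeplitz operator `T^an_ψ f = Σ_j P^an_λ(ψ χ_{B_j} f)`. -/
def TgenA (n : ℕ) (hn : 2 ≤ 2 * n) (l : ℝ) (K : E (2 * n) → E (2 * n) → ℂ)
    (ψ f : E (2 * n) → ℂ) : E (2 * n) → ℂ :=
  fun x => ∑' b : BoxIndex (2 * n) hn, TtermA n hn l K ψ f b x


/-- The normalizing factor relating `dV_λ` to Lebesgue measure in coordinates. -/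
def normConst (n : ℕ) (l : ℝ) : ℝ :=
  cnl n l * ((volume (Metric.ball (0 : E n) 1)).toReal)⁻¹

/-!
Write `A = [x,a]`, `B = [x,b]`, `C = [a,b]` and `D = |a - b|`. Since `|φ_a(b)| = D / C`, we have
`e^{d(a,b)} = (C + D) / (C - D)`, so the upper bound says `A (C - D) ≤ B (C + D)`, that is
`C (A - B) ≤ D (A + B)`. The identity `|x| [x,y] = | |x|² y - x |` makes `y ↦ [x,y]` a
`|x|`-Lipschitz function, whence `A - B ≤ D`; the same bound together with `|a - x| ≤ [x,a]`
gives the triangle inequality `C ≤ A + B`. The lower bound is the upper bound with `a` and `b`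
swapped.
-/

section

variable {n : ℕ}

lemma br_sq (x y : E n) :
    br x y ^ 2 = 1 - 2 * (inner ℝ x y : ℝ) + ‖x‖ ^ 2 * ‖y‖ ^ 2 := by
  refine Real.sq_sqrt ?_
  nlinarith [real_inner_le_norm x y, sq_nonneg (1 - ‖x‖ * ‖y‖)]

lemma br_nonneg (x y : E n) : 0 ≤ br x y := Real.sqrt_nonneg _

lemma br_comm (x y : E n) : br x y = br y x := by
  rw [br, br, real_inner_comm, mul_comm (‖y‖ ^ 2)]

lemma br_sq_eq_norm_sub_sq_add (x y : E n) :
    br x y ^ 2 = ‖x - y‖ ^ 2 + (1 - ‖x‖ ^ 2) * (1 - ‖y‖ ^ 2) := by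
  rw [br_sq, norm_sub_sq_real]
  ring

lemma norm_sub_le_br {x y : E n} (hx : ‖x‖ ≤ 1) (hy : ‖y‖ ≤ 1) :
    ‖x - y‖ ≤ br x y := by
  rw [← sq_le_sq₀ (norm_nonneg _) (br_nonneg x y), br_sq_eq_norm_sub_sq_add]
  nlinarith [mul_nonneg (sub_nonneg.2 hx) (sub_nonneg.2 hy), norm_nonneg x, norm_nonneg y]

lemma norm_sub_lt_br {x y : E n} (hx : ‖x‖ < 1) (hy : ‖y‖ < 1) :
    ‖x - y‖ < br x y := by
  rw [← sq_lt_sq₀ (norm_nonneg _) (br_nonneg x y), br_sq_eq_norm_sub_sq_add]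
  nlinarith [mul_pos (sub_pos.2 hx) (sub_pos.2 hy), norm_nonneg x, norm_nonneg y]

lemma br_pos {x y : E n} (hx : ‖x‖ < 1) (hy : ‖y‖ < 1) : 0 < br x y :=
  (norm_nonneg _).trans_lt (norm_sub_lt_br hx hy)

lemma norm_mul_br (x y : E n) : ‖x‖ * br x y = ‖‖x‖ ^ 2 • y - x‖ := by
  rw [← sq_eq_sq₀ (mul_nonneg (norm_nonneg _) (br_nonneg x y)) (norm_nonneg _), mul_pow, br_sq,
    norm_sub_sq_real, norm_smul, real_inner_smul_left, Real.norm_of_nonneg (by positivity),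
    real_inner_comm]
  ring

lemma abs_br_sub_br_le (x a b : E n) : |br x a - br x b| ≤ ‖x‖ * ‖a - b‖ := by
  rcases (norm_nonneg x).eq_or_lt with hx | hx
  · simp [br, norm_eq_zero.1 hx.symm]
  refine le_of_mul_le_mul_left ?_ hx
  calc ‖x‖ * |br x a - br x b|
        = |‖‖x‖ ^ 2 • a - x‖ - ‖‖x‖ ^ 2 • b - x‖| := by
        rw [← norm_mul_br, ← norm_mul_br, ← mul_sub, abs_mul, abs_norm]
    _ ≤ ‖(‖x‖ ^ 2 • a - x) - (‖x‖ ^ 2 • b - x)‖ := abs_norm_sub_norm_le _ _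
    _ = ‖x‖ * (‖x‖ * ‖a - b‖) := by
        rw [sub_sub_sub_cancel_right, ← smul_sub, norm_smul, Real.norm_of_nonneg (by positivity)]
        ring

lemma br_le_br_add_br {a b x : E n} (ha : ‖a‖ ≤ 1) (hb : ‖b‖ ≤ 1) (hx : ‖x‖ ≤ 1) :
    br a b ≤ br x a + br x b :=
  calc br a b = br b a := br_comm a b
    _ ≤ br b x + ‖b‖ * ‖a - x‖ := by linarith [(abs_le.1 (abs_br_sub_br_le b a x)).2]
    _ ≤ br x b + ‖x - a‖ := by
        rw [br_comm b x, norm_sub_rev]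
        gcongr
        exact mul_le_of_le_one_left (norm_nonneg _) hb
    _ ≤ br x a + br x b := by linarith [norm_sub_le_br hx ha]

lemma norm_mob (a b : E n) : ‖mob a b‖ = ‖a - b‖ / br a b := by
  have hv : ‖‖b - a‖ ^ 2 • a - (1 - ‖a‖ ^ 2) • (b - a)‖ = ‖a - b‖ * br a b := by
    rw [← sq_eq_sq₀ (norm_nonneg _) (mul_nonneg (norm_nonneg _) (br_nonneg a b)), mul_pow,
      br_sq, norm_sub_rev b a]
    simp only [← real_inner_self_eq_norm_sq, inner_sub_left, inner_sub_right,
      real_inner_smul_left, real_inner_smul_right, real_inner_comm a b]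
    ring
  rw [mob, br_comm b a, norm_smul, hv, norm_inv, norm_pow, Real.norm_of_nonneg (br_nonneg a b)]
  rcases (br_nonneg a b).eq_or_lt with h | h
  · simp [← h]
  · field_simp

lemma exp_hypd {a b : E n} (ha : ‖a‖ < 1) (hb : ‖b‖ < 1) :
    Real.exp (hypd a b) = (br a b + ‖a - b‖) / (br a b - ‖a - b‖) := by
  have hlt := norm_sub_lt_br ha hb
  have hbr := br_pos ha hb
  rw [hypd, norm_mob, Real.exp_log (div_pos (by positivity) (by rwa [sub_pos, div_lt_one hbr]))]
  field_simp

lemma hypd_comm {a b : E n} (ha : ‖a‖ < 1) (hb : ‖b‖ < 1) : hypd a b = hypd b a := by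
  rw [← Real.exp_eq_exp, exp_hypd ha hb, exp_hypd hb ha, br_comm, norm_sub_rev]

lemma br_div_br_le_exp_hypd {a b x : E n} (ha : ‖a‖ < 1) (hb : ‖b‖ < 1) (hx : ‖x‖ < 1) :
    br x a / br x b ≤ Real.exp (hypd a b) := by
  have hlt := norm_sub_lt_br ha hb
  rw [exp_hypd ha hb, div_le_div_iff₀ (br_pos hx hb) (sub_pos.2 hlt)]
  have hlip : br x a - br x b ≤ ‖a - b‖ :=
    ((abs_le.1 (abs_br_sub_br_le x a b)).2).trans (mul_le_of_le_one_left (norm_nonneg _) hx.le)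
  have htri := br_le_br_add_br ha.le hb.le hx.le
  -- the goal rearranges to `[a,b] ([x,a] - [x,b]) ≤ |a - b| ([x,a] + [x,b])`
  nlinarith [br_nonneg x a, norm_nonneg (a - b)]

end

theorem statement8_general (n : ℕ) (a : E n) (ha : a ∈ Ball n) (b : E n)
    (hb : b ∈ Ball n) (x : E n) (hx : x ∈ Ball n) :
    Real.exp (-hypd a b) ≤ br x a / br x b ∧ br x a / br x b ≤ Real.exp (hypd a b) := by
  simp only [Ball, mem_ball_zero_iff] at ha hb hx
  refine ⟨?_, br_div_br_le_exp_hypd ha hb hx⟩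
  rw [Real.exp_neg, hypd_comm ha hb, ← inv_div]
  exact inv_anti₀ (div_pos (br_pos hx hb) (br_pos hx ha)) (br_div_br_le_exp_hypd hb ha hx)

/-- **Lemma (bracket controlled by the hyperbolic metric).**
`e^{-d(a,b)} ≤ [x,a]/[x,b] ≤ e^{d(a,b)}`. -/
theorem statement8 (n : ℕ) (hn : 2 ≤ n) (a : E n) (ha : a ∈ Ball n) (b : E n)
    (hb : b ∈ Ball n) (x : E n) (hx : x ∈ Ball n) :
    Real.exp (-hypd a b) ≤ br x a / br x b ∧ br x a / br x b ≤ Real.exp (hypd a b) :=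
  statement8_general n a ha b hb x hx

end HLTV
end
end

section
/- Let g be n-times continuously differentiable on 𝔹_n and α ∈ {0,1}^n with |α| ≥ 1. Then for every multi-index β ∈ ℕ_0^n with 1 ≤ |β| ≤ |α| there is a bounded smooth function d_β on ℚ_n such that, for all γ = (r,θ_2,…,θ_n) ∈ ℚ_n with x = σ(γ), D^α_γ (g∘σ)(γ) = Σ_{1 ≤ |β| ≤ |α|} c_β(γ) d_β(γ) (D^β_x g)(x), where c_β(γ) = Π_{j=2}^{n−1} (sin θ_j)^{max{0, |β| − (α_1 + ⋯ + α_j)}}; here D^α_γ denotes differentiation in the spherical coordinates of ℚ_n and D^β_x differentiation in the Cartesian coordinates of ℝ^n. -/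
noncomputable section

open MeasureTheory Real Set Filter Topology Pointwise
open scoped RealInnerProductSpace ENNReal

namespace HLTV

/-!
Differentiating `g ∘ σ` along the word `L` of spherical directions prescribed by `α` gives, by the
chain and Leibniz rules, a sum `∑_w c_w · (∂_w g) ∘ σ` over Cartesian words `w` with `|w| ≤ |α|`.
Each `∂_i σ_k` is divisible by `∏_{1 ≤ j < i} sin θ_j`, while a derivative in `θ_i` lowers the power
of `sin θ_i` by at most one; tracking exponents shows that `c_w` is
`∏_j (sin θ_j)^{|w| - #{l ∈ L | l ≤ j}}` times an analytic function. By Schwarz's theorem `∂_w g`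
only depends on the letter counts `β` of `w`, and grouping the words by `β` gives `c_β d_β`, where
`d_β` is analytic and hence bounded on the bounded box `ℚ_n`.
-/

open scoped ContDiff

section PartialDerivatives

variable {n : ℕ} {F : Type} [NormedAddCommGroup F] [NormedSpace ℝ F]

theorem hasDerivAt_update_pderivPi {f : (Fin n → ℝ) → F} {γ : Fin n → ℝ}
    (hf : DifferentiableAt ℝ f γ) (i : Fin n) :
    HasDerivAt (fun t => f (Function.update γ i t)) (pderivPi i f γ) (γ i) :=
  hf.hasFDerivAt.comp_hasDerivAt_of_eq (γ i) (hasDerivAt_update γ i (γ i))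
    (Function.update_eq_self i γ).symm

theorem pderivPi_eq_zero_of_update_eq {f : (Fin n → ℝ) → F} {γ : Fin n → ℝ} {i : Fin n}
    (h : ∀ t, f (Function.update γ i t) = f γ) : pderivPi i f γ = 0 := by
  by_cases hf : DifferentiableAt ℝ f γ
  · exact (hasDerivAt_update_pderivPi hf i).unique (by simpa only [h] using hasDerivAt_const _ _)
  · simp [pderivPi, fderiv_zero_of_not_differentiableAt hf]

theorem contDiff_pderivPi {f : (Fin n → ℝ) → F} {k l : WithTop ℕ∞} (hf : ContDiff ℝ k f)
    (hlk : l + 1 ≤ k) (i : Fin n) : ContDiff ℝ l (pderivPi i f) :=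
  (hf.fderiv_right hlk).clm_apply contDiff_const

theorem pderivPi_congr {f g : (Fin n → ℝ) → F} {γ : Fin n → ℝ} (h : f =ᶠ[𝓝 γ] g) (i : Fin n) :
    pderivPi i f γ = pderivPi i g γ := by
  simp only [pderivPi, h.fderiv_eq]

theorem pderivPi_sum {ι : Type} (s : Finset ι) {f : ι → (Fin n → ℝ) → F} {γ : Fin n → ℝ}
    (hf : ∀ a ∈ s, DifferentiableAt ℝ (f a) γ) (i : Fin n) :
    pderivPi i (fun γ => ∑ a ∈ s, f a γ) γ = ∑ a ∈ s, pderivPi i (f a) γ := by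
  simp [pderivPi, fderiv_fun_sum hf]

theorem pderivPi_smul {c : (Fin n → ℝ) → ℝ} {f : (Fin n → ℝ) → F} {γ : Fin n → ℝ}
    (hc : DifferentiableAt ℝ c γ) (hf : DifferentiableAt ℝ f γ) (i : Fin n) :
    pderivPi i (fun γ => c γ • f γ) γ = pderivPi i c γ • f γ + c γ • pderivPi i f γ := by
  simp [pderivPi, fderiv_fun_smul hc hf, add_comm]

theorem pderivPi_mul {c f : (Fin n → ℝ) → ℝ} {γ : Fin n → ℝ}
    (hc : DifferentiableAt ℝ c γ) (hf : DifferentiableAt ℝ f γ) (i : Fin n) :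
    pderivPi i (fun γ => c γ * f γ) γ = pderivPi i c γ * f γ + c γ * pderivPi i f γ :=
  pderivPi_smul hc hf i

theorem pderivPi_comp {m : ℕ} {g : E m → F} {Φ : (Fin n → ℝ) → E m} {γ : Fin n → ℝ}
    (hg : DifferentiableAt ℝ g (Φ γ)) (hΦ : DifferentiableAt ℝ Φ γ) (i : Fin n) :
    pderivPi i (fun γ => g (Φ γ)) γ =
      ∑ k, pderivPi i (fun γ => Φ γ k) γ • pderivE k g (Φ γ) := by
  have hcoord : ∀ k, pderivPi i (fun γ => Φ γ k) γ = fderiv ℝ Φ γ (Pi.single i 1) k := fun k =>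
    congrArg (· (Pi.single i 1))
      ((EuclideanSpace.proj k : E m →L[ℝ] ℝ).hasFDerivAt.comp γ hΦ.hasFDerivAt).fderiv
  have hchain : pderivPi i (fun γ => g (Φ γ)) γ =
      fderiv ℝ g (Φ γ) (fderiv ℝ Φ γ (Pi.single i 1)) := by
    simp [pderivPi, fderiv_fun_comp γ hg hΦ]
  rw [hchain]
  conv_lhs => rw [← (EuclideanSpace.basisFun (Fin m) ℝ).sum_repr (fderiv ℝ Φ γ (Pi.single i 1))]
  simp [pderivE, hcoord]

theorem pderivE_congr {m : ℕ} {f g : E m → F} {x : E m} (h : f =ᶠ[𝓝 x] g) (i : Fin m) :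
    pderivE i f x = pderivE i g x := by
  simp only [pderivE, h.fderiv_eq]

end PartialDerivatives

section Words

variable {m : ℕ}

def toWord (β : Fin m → ℕ) : List (Fin m) :=
  (List.finRange m).flatMap fun i => List.replicate (β i) i

theorem foldr_iterate_eq_foldr_toWord {X : Type*} (op : Fin m → X → X) (β : Fin m → ℕ) (x : X) :
    (List.finRange m).foldr (fun i y => (op i)^[β i] y) x = (toWord β).foldr op x := by
  have hrep : ∀ i y, (List.replicate (β i) i).foldr op y = (op i)^[β i] y := fun i y => by
    induction β i with
    | zero => rfl
    | succ k ih => rw [List.replicate_succ, List.foldr_cons, ih, Function.iterate_succ_apply']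
  simp only [toWord, List.foldr_flatMap, hrep]

theorem Dmulti_eq_foldr_toWord {F : Type} [NormedAddCommGroup F] [NormedSpace ℝ F]
    (β : Fin m → ℕ) (g : E m → F) : Dmulti β g = (toWord β).foldr pderivE g :=
  foldr_iterate_eq_foldr_toWord _ β g

theorem DmultiPi_eq_foldr_toWord {F : Type} [NormedAddCommGroup F] [NormedSpace ℝ F]
    (β : Fin m → ℕ) (G : (Fin m → ℝ) → F) : DmultiPi β G = (toWord β).foldr pderivPi G :=
  foldr_iterate_eq_foldr_toWord _ β G

theorem countP_toWord (β : Fin m → ℕ) (p : Fin m → Bool) :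
    (toWord β).countP p = ∑ i ∈ Finset.univ.filter (fun i => p i), β i := by
  simp [toWord, List.countP_flatMap, List.countP_replicate, Finset.sum_filter, ← Fin.sum_univ_def]

theorem count_toWord (β : Fin m → ℕ) (i : Fin m) : (toWord β).count i = β i := by
  rw [List.count_eq_countP, countP_toWord]
  simp [Finset.filter_eq']

theorem sum_count (w : List (Fin m)) : ∑ i, w.count i = w.length := by
  simpa using Multiset.sum_count_eq_card (s := Finset.univ) (m := (w : Multiset (Fin m)))
    fun a _ => Finset.mem_univ a

theorem length_toWord (β : Fin m → ℕ) : (toWord β).length = ∑ i, β i := by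
  simp only [← sum_count, count_toWord]

def wordsLE : ℕ → Finset (List (Fin m))
  | 0 => {[]}
  | N + 1 => insert [] ((Finset.univ ×ˢ wordsLE N).image fun p => p.1 :: p.2)

theorem mem_wordsLE {N : ℕ} {w : List (Fin m)} : w ∈ wordsLE N ↔ w.length ≤ N := by
  induction N generalizing w with
  | zero => cases w <;> simp [wordsLE]
  | succ N ih => cases w <;> simp [wordsLE, ih]

theorem sum_wordsLE_succ {M : Type} [AddCommMonoid M] (N : ℕ) (f : List (Fin m) → M) :
    ∑ w ∈ wordsLE (N + 1), f w = f [] + ∑ k, ∑ w ∈ wordsLE N, f (k :: w) := by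
  rw [wordsLE, Finset.sum_insert (by simp), Finset.sum_image (by simp), Finset.sum_product]

end Words

section CartesianDerivatives

variable {m : ℕ} {F : Type} [NormedAddCommGroup F] [NormedSpace ℝ F] {g : E m → F}
  {V : Set (E m)}

theorem contDiffOn_foldr_pderivE (hV : IsOpen V) {N : ℕ} (hg : ContDiffOn ℝ (N : ℕ∞) g V)
    (w : List (Fin m)) (k : ℕ) (hwk : w.length + k ≤ N) :
    ContDiffOn ℝ (k : ℕ∞) (w.foldr pderivE g) V := by
  induction w generalizing k with
  | nil => exact hg.of_le (by exact_mod_cast (by simpa using hwk))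
  | cons a w ih =>
    have hw := ih (k + 1) (by simp only [List.length_cons] at hwk; omega)
    exact (hw.fderiv_of_isOpen hV (by push_cast; rfl)).clm_apply contDiffOn_const

theorem pderivE_pderivE_comm (hV : IsOpen V) (hg : ContDiffOn ℝ 2 g V) (a b : Fin m) {x : E m}
    (hx : x ∈ V) : pderivE a (pderivE b g) x = pderivE b (pderivE a g) x := by
  have hat : ContDiffAt ℝ 2 g x := hg.contDiffAt (hV.mem_nhds hx)
  have hdiff : DifferentiableAt ℝ (fderiv ℝ g) x :=
    (hat.fderiv_right (m := 1) (by norm_num)).differentiableAt (by norm_num)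
  have hsecond : ∀ i j : Fin m, pderivE i (pderivE j g) x =
      fderiv ℝ (fderiv ℝ g) x (EuclideanSpace.single i 1) (EuclideanSpace.single j 1) := by
    intro i j
    change fderiv ℝ (fun y => fderiv ℝ g y (EuclideanSpace.single j 1)) x _ = _
    simp [fderiv_clm_apply hdiff (differentiableAt_const _)]
  rw [hsecond, hsecond, hat.isSymmSndFDerivAt (by simp)]

theorem foldr_pderivE_eq_of_perm (hV : IsOpen V) {N : ℕ} (hg : ContDiffOn ℝ (N : ℕ∞) g V)
    {w w' : List (Fin m)} (hperm : w.Perm w') (hw : w.length ≤ N) {x : E m} (hx : x ∈ V) :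
    w.foldr pderivE g x = w'.foldr pderivE g x := by
  induction hperm generalizing x with
  | nil => rfl
  | cons a _ ih =>
    exact pderivE_congr (Filter.eventually_of_mem (hV.mem_nhds hx) fun y hy =>
      ih (by simp at hw; omega) hy) a
  | swap a b w =>
    exact pderivE_pderivE_comm hV
      (by exact_mod_cast contDiffOn_foldr_pderivE hV hg w 2 (by simp at hw; omega)) b a hx
  | trans h₁ _ ih₁ ih₂ => exact (ih₁ hw hx).trans (ih₂ (h₁.length_eq ▸ hw) hx)

theorem sum_smul_foldr_pderivE_eq_sum_Dmulti (hV : IsOpen V) {N : ℕ}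
    (hg : ContDiffOn ℝ (N : ℕ∞) g V) {x : E m} (hx : x ∈ V) (W : Finset (List (Fin m)))
    (hW : ∀ w ∈ W, w.length ≤ N) (c : List (Fin m) → ℝ) :
    ∑ w ∈ W, c w • w.foldr pderivE g x =
      ∑ β : Fin m → Fin (N + 1),
        (∑ w ∈ W with (fun i => w.count i) = fun i => (β i).val, c w) •
          Dmulti (fun i => (β i).val) g x := by
  rw [← Finset.sum_fiberwise W fun w i => Fin.ofNat (N + 1) (w.count i)]
  refine Finset.sum_congr rfl fun β _ => ?_
  have hfib : ∀ w ∈ W, (fun i => Fin.ofNat (N + 1) (w.count i)) = β ↔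
      (fun i => w.count i) = fun i => (β i).val := fun w hw => by
    simp only [funext_iff, Fin.ext_iff, Fin.val_ofNat]
    refine forall_congr' fun i => ?_
    rw [Nat.mod_eq_of_lt (Nat.lt_succ_of_le (List.count_le_length.trans (hW w hw)))]
  rw [Finset.filter_congr hfib, Finset.sum_smul]
  refine Finset.sum_congr rfl fun w hw => ?_
  obtain ⟨hwW, hcount⟩ := Finset.mem_filter.1 hw
  -- Schwarz: `w` is a permutation of the word `toWord β` defining `Dmulti β`
  rw [Dmulti_eq_foldr_toWord, ← hcount, foldr_pderivE_eq_of_perm (w' := toWord (w.count ·)) hV hg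
    (List.perm_iff_count.2 fun i => (count_toWord (w.count ·) i).symm) (hW w hwW) hx]

end CartesianDerivatives

section ChainRule

variable {n m : ℕ} (Φ : (Fin n → ℝ) → E m)

/-- The coefficient of `(∂_w g) ∘ Φ` in `∂_L (g ∘ Φ)`: differentiating `(∂_w g) ∘ Φ` in direction
`i` either hits the coefficient (Leibniz) or produces `∑ k, ∂_i Φ_k • (∂_{k :: w} g) ∘ Φ`. -/
def chainCoeff : List (Fin n) → List (Fin m) → (Fin n → ℝ) → ℝ
  | [], [] => fun _ => 1
  | [], _ :: _ => fun _ => 0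
  | i :: L, [] => pderivPi i (chainCoeff L [])
  | i :: L, k :: w => fun γ =>
      pderivPi i (chainCoeff L (k :: w)) γ + pderivPi i (fun γ => Φ γ k) γ * chainCoeff L w γ

theorem contDiff_chainCoeff (hΦ : ContDiff ℝ ∞ Φ) (L : List (Fin n)) (w : List (Fin m)) :
    ContDiff ℝ ∞ (chainCoeff Φ L w) := by
  induction L generalizing w with
  | nil => cases w <;> exact contDiff_const
  | cons i L ih =>
    cases w with
    | nil => exact contDiff_pderivPi (ih []) (by simp) i
    | cons k w =>
      exact (contDiff_pderivPi (ih _) (by simp) i).add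
        ((contDiff_pderivPi (contDiff_euclidean.1 hΦ k) (by simp) i).mul (ih w))

theorem chainCoeff_eq_zero_of_length_lt {L : List (Fin n)} {w : List (Fin m)}
    (h : L.length < w.length) : chainCoeff Φ L w = 0 := by
  induction L generalizing w with
  | nil => cases w with
    | nil => simp at h
    | cons k w => rfl
  | cons i L ih =>
    cases w with
    | nil => simp at h
    | cons k w =>
      simp only [List.length_cons] at h
      funext γ
      simp [chainCoeff, ih (w := k :: w) (by simp; omega), ih (w := w) (by omega), pderivPi]

theorem chainCoeff_cons_nil (i : Fin n) (L : List (Fin n)) : chainCoeff Φ (i :: L) [] = 0 := by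
  induction L generalizing i with
  | nil => funext γ; simp [chainCoeff, pderivPi]
  | cons j L ih =>
    change pderivPi i (chainCoeff Φ (j :: L) []) = 0
    rw [ih]
    funext γ
    simp [pderivPi]

variable {F : Type} [NormedAddCommGroup F] [NormedSpace ℝ F] {g : E m → F} {V : Set (E m)}
  {N : ℕ} {γ : Fin n → ℝ}

theorem foldr_pderivPi_comp_eq_sum (hΦ : ContDiff ℝ ∞ Φ) (hV : IsOpen V)
    (hg : ContDiffOn ℝ (N : ℕ∞) g V) (L : List (Fin n)) (hL : L.length ≤ N) (hγ : Φ γ ∈ V) :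
    L.foldr pderivPi (fun γ => g (Φ γ)) γ =
      ∑ w ∈ wordsLE L.length, chainCoeff Φ L w γ • w.foldr pderivE g (Φ γ) := by
  induction L generalizing γ with
  | nil => simp [wordsLE, chainCoeff]
  | cons i L ih =>
    simp only [List.length_cons] at hL
    have hΦγ : DifferentiableAt ℝ Φ γ := hΦ.differentiable (by simp) γ
    have hc : ∀ w, DifferentiableAt ℝ (chainCoeff Φ L w) γ := fun w =>
      (contDiff_chainCoeff Φ hΦ L w).differentiable (by simp) γ
    have hD : ∀ w ∈ wordsLE L.length, DifferentiableAt ℝ (w.foldr pderivE g) (Φ γ) := fun w hw =>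
      ((contDiffOn_foldr_pderivE hV hg w 1 (by rw [mem_wordsLE] at hw; omega)).differentiableOn
        (by simp)).differentiableAt (hV.mem_nhds hγ)
    have hnear : ∀ᶠ γ' in 𝓝 γ, L.foldr pderivPi (fun γ => g (Φ γ)) γ' =
        ∑ w ∈ wordsLE L.length, chainCoeff Φ L w γ' • w.foldr pderivE g (Φ γ') :=
      Filter.eventually_of_mem (hΦ.continuous.continuousAt.preimage_mem_nhds (hV.mem_nhds hγ))
        fun γ' hγ' => ih (by omega) hγ'
    have hlong : ∑ w ∈ wordsLE L.length,
          pderivPi i (chainCoeff Φ L w) γ • w.foldr pderivE g (Φ γ) =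
        ∑ w ∈ wordsLE (L.length + 1),
          pderivPi i (chainCoeff Φ L w) γ • w.foldr pderivE g (Φ γ) := by
      refine Finset.sum_subset (fun w hw => by rw [mem_wordsLE] at hw ⊢; omega) fun w _ hw => ?_
      rw [chainCoeff_eq_zero_of_length_lt Φ (by rw [mem_wordsLE] at hw; omega)]
      simp [pderivPi]
    calc (i :: L).foldr pderivPi (fun γ => g (Φ γ)) γ
        = ∑ w ∈ wordsLE L.length, (pderivPi i (chainCoeff Φ L w) γ • w.foldr pderivE g (Φ γ) +
            chainCoeff Φ L w γ •
              ∑ k, pderivPi i (fun γ => Φ γ k) γ • (k :: w).foldr pderivE g (Φ γ)) := by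
          rw [List.foldr_cons, pderivPi_congr hnear,
            pderivPi_sum (f := fun w γ => chainCoeff Φ L w γ • w.foldr pderivE g (Φ γ)) _
              fun w hw => (hc w).smul ((hD w hw).comp γ hΦγ)]
          refine Finset.sum_congr rfl fun w hw => ?_
          rw [pderivPi_smul (f := fun γ => w.foldr pderivE g (Φ γ)) (hc w) ((hD w hw).comp γ hΦγ),
            pderivPi_comp (hD w hw) hΦγ]
          rfl
      _ = _ := by
          rw [Finset.sum_add_distrib, hlong, List.length_cons, sum_wordsLE_succ, sum_wordsLE_succ]
          simp only [chainCoeff, add_smul, mul_smul, Finset.smul_sum, Finset.sum_add_distrib,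
            smul_comm (chainCoeff Φ L _ γ) (pderivPi i _ γ)]
          rw [Finset.sum_comm (s := wordsLE L.length)]
          abel

theorem foldr_pderivPi_comp_eq_sum_Dmulti (hΦ : ContDiff ℝ ∞ Φ) (hV : IsOpen V)
    (hg : ContDiffOn ℝ (N : ℕ∞) g V) {L : List (Fin n)} (hL : L ≠ []) (hLN : L.length ≤ N)
    (hγ : Φ γ ∈ V) :
    L.foldr pderivPi (fun γ => g (Φ γ)) γ =
      ∑ β : Fin m → Fin (N + 1),
        if 1 ≤ ∑ i, (β i).val ∧ ∑ i, (β i).val ≤ L.length then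
          (∑ w ∈ wordsLE L.length with (fun i => w.count i) = fun i => (β i).val,
            chainCoeff Φ L w γ) • Dmulti (fun i => (β i).val) g (Φ γ)
        else 0 := by
  rw [foldr_pderivPi_comp_eq_sum Φ hΦ hV hg L hLN hγ, sum_smul_foldr_pderivE_eq_sum_Dmulti hV hg
    hγ _ fun w hw => (mem_wordsLE.1 hw).trans hLN]
  refine Finset.sum_congr rfl fun β _ => ?_
  split_ifs with hβ
  · rfl
  -- outside the range of `β` the only candidate word is `[]`, whose coefficient vanishes
  rw [Finset.sum_eq_zero, zero_smul]
  intro w hw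
  obtain ⟨hw, hcount⟩ := Finset.mem_filter.1 hw
  have hlen : w.length = ∑ i, (β i).val := by
    rw [← sum_count]
    exact Finset.sum_congr rfl fun i _ => congrFun hcount i
  have hw0 : w = [] := List.eq_nil_of_length_eq_zero (by rw [mem_wordsLE] at hw; omega)
  obtain ⟨i, L, rfl⟩ := List.exists_cons_of_ne_nil hL
  rw [hw0, chainCoeff_cons_nil]
  rfl

end ChainRule

section SinePowers

variable {n : ℕ} (s : Finset (Fin n))

def sinPow (e : Fin n → ℕ) (γ : Fin n → ℝ) : ℝ := ∏ j ∈ s, Real.sin (γ j) ^ e j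

def SinDvd (e : Fin n → ℕ) (f : (Fin n → ℝ) → ℝ) : Prop :=
  ∃ b : (Fin n → ℝ) → ℝ, ContDiff ℝ ω b ∧ ∀ γ, f γ = sinPow s e γ * b γ

variable {s}

theorem contDiff_sinPow (e : Fin n → ℕ) : ContDiff ℝ ω (sinPow s e) :=
  contDiff_prod fun j _ => (Real.contDiff_sin.comp (contDiff_apply ℝ ℝ j)).pow _

theorem sinPow_eq_mul_sinPow_sub {e e' : Fin n → ℕ} (h : ∀ j ∈ s, e' j ≤ e j) (γ : Fin n → ℝ) :
    sinPow s e γ = sinPow s e' γ * sinPow s (e - e') γ := by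
  simp only [sinPow, ← Finset.prod_mul_distrib, ← pow_add]
  exact Finset.prod_congr rfl fun j hj => by rw [Pi.sub_apply, Nat.add_sub_cancel' (h j hj)]

theorem pderivPi_sinPow (e : Fin n → ℕ) (i : Fin n) (γ : Fin n → ℝ) :
    pderivPi i (sinPow s e) γ =
      sinPow s (Function.update e i (e i - 1)) γ * (if i ∈ s then e i * Real.cos (γ i) else 0) := by
  have hline := hasDerivAt_update_pderivPi
    ((contDiff_sinPow (s := s) e).differentiable (by simp) γ) i
  split_ifs with hi
  · have hsplit : ∀ (e' : Fin n → ℕ) (x : Fin n → ℝ),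
        sinPow s e' x = Real.sin (x i) ^ e' i * ∏ j ∈ s.erase i, Real.sin (x j) ^ e' j :=
      fun e' x => (Finset.mul_prod_erase s _ hi).symm
    set C := ∏ j ∈ s.erase i, Real.sin (γ j) ^ e j
    have hrest : ∀ (e' : Fin n → ℕ) (x : Fin n → ℝ), (∀ j ∈ s.erase i, e' j = e j ∧ x j = γ j) →
        ∏ j ∈ s.erase i, Real.sin (x j) ^ e' j = C := fun e' x h =>
      Finset.prod_congr rfl fun j hj => by rw [(h j hj).1, (h j hj).2]
    have hline' : HasDerivAt (fun t => Real.sin t ^ e i * C) (pderivPi i (sinPow s e) γ) (γ i) := by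
      refine hline.congr_of_eventuallyEq (Filter.Eventually.of_forall fun t => ?_)
      dsimp only
      rw [hsplit, Function.update_self, hrest]
      exact fun j hj => ⟨rfl, Function.update_of_ne (Finset.ne_of_mem_erase hj) _ _⟩
    rw [hline'.unique (((Real.hasDerivAt_sin _).pow (e i)).mul_const C), hsplit,
      Function.update_self, hrest]
    · ring
    · exact fun j hj => ⟨Function.update_of_ne (Finset.ne_of_mem_erase hj) _ _, rfl⟩
  · simp only [mul_zero]
    refine pderivPi_eq_zero_of_update_eq fun t => Finset.prod_congr rfl fun j hj => ?_
    rw [Function.update_of_ne (ne_of_mem_of_not_mem hj hi)]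

namespace SinDvd

theorem of_contDiff {f : (Fin n → ℝ) → ℝ} (hf : ContDiff ℝ ω f) : SinDvd s 0 f :=
  ⟨f, hf, fun γ => by simp [sinPow]⟩

theorem zero (e : Fin n → ℕ) : SinDvd s e 0 :=
  ⟨0, contDiff_const, fun γ => by simp⟩

theorem mono {e e' : Fin n → ℕ} {f : (Fin n → ℝ) → ℝ} (hf : SinDvd s e f)
    (h : ∀ j ∈ s, e' j ≤ e j) : SinDvd s e' f := by
  obtain ⟨b, hb, hfb⟩ := hf
  refine ⟨fun γ => sinPow s (e - e') γ * b γ, (contDiff_sinPow _).mul hb, fun γ => ?_⟩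
  rw [hfb, sinPow_eq_mul_sinPow_sub h, mul_assoc]

theorem add {e : Fin n → ℕ} {f g : (Fin n → ℝ) → ℝ} (hf : SinDvd s e f) (hg : SinDvd s e g) :
    SinDvd s e (f + g) := by
  obtain ⟨b, hb, hfb⟩ := hf
  obtain ⟨c, hc, hgc⟩ := hg
  exact ⟨b + c, hb.add hc, fun γ => by simp [hfb, hgc, mul_add]⟩

theorem mul {e e' : Fin n → ℕ} {f g : (Fin n → ℝ) → ℝ} (hf : SinDvd s e f)
    (hg : SinDvd s e' g) : SinDvd s (e + e') (f * g) := by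
  obtain ⟨b, hb, hfb⟩ := hf
  obtain ⟨c, hc, hgc⟩ := hg
  refine ⟨b * c, hb.mul hc, fun γ => ?_⟩
  have : sinPow s (e + e') γ = sinPow s e γ * sinPow s e' γ := by
    simp only [sinPow, ← Finset.prod_mul_distrib, Pi.add_apply, pow_add]
  simp only [Pi.mul_apply, hfb, hgc, this]
  ring

theorem pderivPi {e : Fin n → ℕ} {f : (Fin n → ℝ) → ℝ} (hf : SinDvd s e f) (i : Fin n) :
    SinDvd s (Function.update e i (e i - 1)) (HLTV.pderivPi i f) := by
  obtain ⟨b, hb, hfb⟩ := hf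
  set e' := Function.update e i (e i - 1)
  have he' : ∀ j ∈ s, e' j ≤ e j := fun j _ => by
    simp only [e', Function.update_apply]
    split_ifs with h <;> simp [h]
  have hcos : ContDiff ℝ ω fun γ : Fin n → ℝ => if i ∈ s then e i * Real.cos (γ i) else 0 := by
    split_ifs <;> fun_prop
  refine ⟨fun γ => (if i ∈ s then e i * Real.cos (γ i) else 0) * b γ +
      sinPow s (e - e') γ * HLTV.pderivPi i b γ,
    (hcos.mul hb).add ((contDiff_sinPow _).mul (contDiff_pderivPi hb (by simp) i)), fun γ => ?_⟩
  rw [show f = fun γ => sinPow s e γ * b γ from funext hfb,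
    pderivPi_mul ((contDiff_sinPow e).differentiable (by simp) γ)
      (hb.differentiable (by simp) γ) i,
    pderivPi_sinPow, sinPow_eq_mul_sinPow_sub he' γ]
  ring

end SinDvd

end SinePowers

section SphericalCoordinates

variable {n : ℕ} (hn : 2 ≤ n)

theorem sph_apply (γ : Fin n → ℝ) (k : Fin n) :
    sph n hn γ k = γ (i0 n hn) *
      (∏ j ∈ Finset.univ.filter (fun j : Fin n => 1 ≤ j.val ∧ j.val ≤ k.val), Real.sin (γ j)) *
      (if h : k.val + 1 < n then Real.cos (γ ⟨k.val + 1, h⟩) else 1) := rfl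

theorem contDiff_sph : ContDiff ℝ ω (sph n hn) := by
  refine contDiff_euclidean.2 fun k => ?_
  simp only [sph_apply]
  split_ifs <;> fun_prop

theorem sum_sph_sq (γ : Fin n → ℝ) : ∑ k, sph n hn γ k ^ 2 = γ (i0 n hn) ^ 2 := by
  set Q : ℕ → ℝ := fun m =>
    ∏ j ∈ Finset.univ.filter (fun j : Fin n => 1 ≤ j.val ∧ j.val ≤ m), Real.sin (γ j) ^ 2
  set f : ℕ → ℝ := fun m => if h : m < n then sph n hn γ ⟨m, h⟩ ^ 2 else 0
  have hQ : ∀ m (h : m + 1 < n), Q (m + 1) = Q m * Real.sin (γ ⟨m + 1, h⟩) ^ 2 := by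
    intro m h
    have : Finset.univ.filter (fun j : Fin n => 1 ≤ j.val ∧ j.val ≤ m + 1) =
        insert ⟨m + 1, h⟩ (Finset.univ.filter fun j : Fin n => 1 ≤ j.val ∧ j.val ≤ m) := by
      ext j; simp [Fin.ext_iff]; omega
    simp only [Q]
    rw [this, Finset.prod_insert (by simp), mul_comm]
  have hf : ∀ m (h : m < n), f m =
      γ (i0 n hn) ^ 2 * Q m * (if h : m + 1 < n then Real.cos (γ ⟨m + 1, h⟩) ^ 2 else 1) := by
    intro m h
    simp only [f, dif_pos h, sph_apply, Q, mul_pow, Finset.prod_pow]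
    split_ifs <;> ring
  -- `Q m (cos² + sin²) = Q m` makes the partial sums telescope
  have htel : ∀ N < n, ∑ m ∈ Finset.range N, f m + γ (i0 n hn) ^ 2 * Q N = γ (i0 n hn) ^ 2 := by
    intro N
    induction N with
    | zero =>
      intro _
      simp only [Finset.sum_range_zero, zero_add, Q]
      rw [Finset.prod_eq_one fun j hj => by simp at hj; omega, mul_one]
    | succ N ih =>
      intro hN
      rw [Finset.sum_range_succ, hf N (by omega), dif_pos hN, hQ N hN]
      linear_combination ih (by omega) +
        γ (i0 n hn) ^ 2 * Q N * Real.cos_sq_add_sin_sq (γ ⟨N + 1, hN⟩)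
  have hsum : ∑ k, sph n hn γ k ^ 2 = ∑ m ∈ Finset.range n, f m := by
    rw [← Fin.sum_univ_eq_sum_range]
    simp [f]
  obtain ⟨N, rfl⟩ : ∃ N, n = N + 1 := ⟨n - 1, by omega⟩
  rw [hsum, Finset.sum_range_succ, hf N (by omega), dif_neg (by omega)]
  linear_combination htel N (by omega)

theorem norm_sph (γ : Fin n → ℝ) : ‖sph n hn γ‖ = |γ (i0 n hn)| := by
  rw [EuclideanSpace.norm_eq, ← Real.sqrt_sq_eq_abs, ← sum_sph_sq hn]
  simp

theorem sph_mem_Ball {γ : Fin n → ℝ} (hγ : γ ∈ QQn n hn) : sph n hn γ ∈ Ball n := by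
  rw [Ball, mem_ball_zero_iff, norm_sph, abs_lt]
  exact ⟨by linarith [hγ.1.1], hγ.1.2⟩

theorem isBounded_QQn : Bornology.IsBounded (QQn n hn) := by
  refine (Metric.isBounded_Icc (0 : Fin n → ℝ) fun _ => 2 * π).subset fun γ hγ => ?_
  obtain ⟨⟨h0, h1⟩, hmid, ⟨hl0, hl1⟩⟩ := hγ
  have hπ := Real.pi_gt_three
  suffices h : ∀ j, 0 ≤ γ j ∧ γ j ≤ 2 * π from ⟨fun j => (h j).1, fun j => (h j).2⟩
  intro j
  by_cases hj0 : j = i0 n hn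
  · subst hj0; constructor <;> linarith
  by_cases hjl : j = ilast n hn
  · subst hjl; exact ⟨hl0, hl1⟩
  have hj := hmid j (by simp [Fin.ext_iff, i0] at hj0; omega)
    (by simp [Fin.ext_iff, ilast] at hjl; omega)
  constructor <;> linarith [hj.1, hj.2]

variable {hn} {s : Finset (Fin n)}

theorem sinDvd_sph_apply (hs : ∀ j ∈ s, 1 ≤ j.val) (k : Fin n) :
    SinDvd s (fun j => if j.val ≤ k.val then 1 else 0) fun γ => sph n hn γ k := by
  set T := Finset.univ.filter fun j : Fin n => 1 ≤ j.val ∧ j.val ≤ k.val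
  have hT : T.filter (· ∈ s) = s.filter fun j => j.val ≤ k.val := by
    ext j
    have := hs j
    simp only [T, Finset.mem_filter, Finset.mem_univ, true_and]
    tauto
  refine ⟨fun γ => γ (i0 n hn) * (∏ j ∈ T.filter (· ∉ s), Real.sin (γ j)) *
      (if h : k.val + 1 < n then Real.cos (γ ⟨k.val + 1, h⟩) else 1), ?_, fun γ => ?_⟩
  · split_ifs <;> fun_prop
  · dsimp only
    rw [sph_apply, ← Finset.prod_filter_mul_prod_filter_not T (· ∈ s), hT, sinPow,
      Finset.prod_filter]
    simp only [pow_ite, pow_one, pow_zero]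
    ring

theorem pderivPi_sph_apply_of_lt {i k : Fin n} (hki : k.val + 1 < i.val) :
    pderivPi i (fun γ => sph n hn γ k) = 0 := by
  funext γ
  refine pderivPi_eq_zero_of_update_eq fun t => ?_
  have hupd : ∀ j : Fin n, j.val ≤ k.val + 1 → Function.update γ i t j = γ j := fun j hj =>
    Function.update_of_ne (Fin.ne_of_val_ne (by omega)) _ _
  simp only [sph_apply]
  rw [hupd _ (by simp [i0]), Finset.prod_congr rfl fun j hj => by
    rw [hupd j (by simp only [Finset.mem_filter] at hj; omega)]]
  split_ifs
  · rw [hupd _ le_rfl]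
  · rfl

theorem sinDvd_pderivPi_sph_apply (hs : ∀ j ∈ s, 1 ≤ j.val) (i k : Fin n) :
    SinDvd s (fun j => if j.val < i.val then 1 else 0) (pderivPi i fun γ => sph n hn γ k) := by
  by_cases hki : k.val + 1 < i.val
  · rw [pderivPi_sph_apply_of_lt hki]
    exact SinDvd.zero _
  · refine ((sinDvd_sph_apply hs k).pderivPi i).mono fun j _ => ?_
    rcases eq_or_ne j i with rfl | hji
    · simp only [Function.update_self]
      split_ifs <;> omega
    · have := Fin.val_ne_of_ne hji
      simp only [Function.update_of_ne hji]
      split_ifs <;> omega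

theorem sinDvd_chainCoeff_sph (hs : ∀ j ∈ s, 1 ≤ j.val) (L w : List (Fin n)) :
    SinDvd s (fun j => w.length - L.countP (fun l => l.val ≤ j.val))
      (chainCoeff (sph n hn) L w) := by
  induction L generalizing w with
  | nil =>
    cases w with
    | nil => exact (SinDvd.of_contDiff contDiff_const).mono fun j _ => by simp
    | cons k w => exact SinDvd.zero _
  | cons i L ih =>
    cases w with
    | nil => exact ((ih []).pderivPi i).mono fun j _ => by simp
    | cons k w =>
      refine SinDvd.add (((ih (k :: w)).pderivPi i).mono fun j _ => ?_)
        (((sinDvd_pderivPi_sph_apply hs i k).mul (ih w)).mono fun j _ => ?_)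
      · rcases eq_or_ne j i with rfl | hji
        · simp only [Function.update_self, List.countP_cons, List.length_cons, le_refl,
            decide_true, if_true]
          omega
        · simp only [Function.update_of_ne hji, List.countP_cons, List.length_cons]
          split_ifs <;> omega
      · simp only [Pi.add_apply, List.countP_cons, List.length_cons, decide_eq_true_eq]
        split_ifs <;> omega

theorem exists_chainCoeff_sph_eq_cbeta_mul (α : Fin n → Bool) :
    ∃ b : List (Fin n) → (Fin n → ℝ) → ℝ, (∀ w, ContDiff ℝ ⊤ (b w)) ∧
      ∀ w γ, chainCoeff (sph n hn) (toWord (natOf α)) w γ =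
        cbeta α (fun i => w.count i) γ * b w γ := by
  choose b hb_smooth hb using fun w => sinDvd_chainCoeff_sph (hn := hn)
    (s := Finset.univ.filter fun j : Fin n => 1 ≤ j.val ∧ j.val ≤ n - 2)
    (fun j hj => (Finset.mem_filter.1 hj).2.1) (toWord (natOf α)) w
  refine ⟨b, hb_smooth, fun w γ => ?_⟩
  simp only [hb, sinPow, cbeta, ← sum_count w, countP_toWord, decide_eq_true_eq]

end SphericalCoordinates

theorem exists_abs_le_of_isBounded {X : Type*} [PseudoMetricSpace X] [ProperSpace X] {s : Set X}
    (hs : Bornology.IsBounded s) {f : X → ℝ} (hf : Continuous f) : ∃ M, ∀ x ∈ s, |f x| ≤ M := by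
  obtain ⟨M, hM⟩ := hs.isCompact_closure.exists_bound_of_continuousOn hf.continuousOn
  exact ⟨M, fun x hx => hM x (subset_closure hx)⟩

theorem sum_natOf_le {n : ℕ} (α : Fin n → Bool) : ∑ i, natOf α i ≤ n :=
  calc ∑ i, natOf α i ≤ ∑ _i : Fin n, 1 :=
        Finset.sum_le_sum fun i _ => by unfold natOf; split <;> omega
    _ = n := by simp

/-- **Lemma (spherical vs Cartesian derivatives).** For `α ∈ {0,1}^n`, `|α| ≥ 1`,
`D^α_γ (g∘σ) = Σ_{1 ≤ |β| ≤ |α|} c_β d_β (D^β_x g)∘σ` with bounded smooth functions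
`d_β` on `ℚ_n`. -/
theorem statement16 (n : ℕ) (hn : 2 ≤ n) (g : E n → ℂ)
    (hg : ContDiffOn ℝ (n : ℕ∞) g (Ball n))
    (α : Fin n → Bool) (hα : 1 ≤ ∑ i, natOf α i) :
    ∃ d : (Fin n → ℕ) → (Fin n → ℝ) → ℝ,
      (∀ β : Fin n → ℕ, 1 ≤ ∑ i, β i → (∑ i, β i) ≤ ∑ i, natOf α i →
        ContDiffOn ℝ ⊤ (d β) (QQn n hn) ∧ ∃ M : ℝ, ∀ γ ∈ QQn n hn, |d β γ| ≤ M) ∧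
      ∀ γ ∈ QQn n hn,
        DmultiPi (natOf α) (fun γ' => g (sph n hn γ')) γ =
          ∑ β : Fin n → Fin (n + 1),
            if 1 ≤ ∑ i, (β i).val ∧ (∑ i, (β i).val) ≤ ∑ i, natOf α i then
              ((cbeta α (fun i => (β i).val) γ * d (fun i => (β i).val) γ : ℝ) : ℂ) *
                Dmulti (fun i => (β i).val) g (sph n hn γ)
            else 0 := by
  obtain ⟨b, hb_smooth, hb⟩ := exists_chainCoeff_sph_eq_cbeta_mul (hn := hn) α
  refine ⟨fun β γ => ∑ w ∈ wordsLE (∑ i, natOf α i) with (fun i => w.count i) = β, b w γ,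
    fun β _ _ => ?_, fun γ hγ => ?_⟩
  · have hd : ContDiff ℝ ⊤ fun γ =>
        ∑ w ∈ wordsLE (∑ i, natOf α i) with (fun i => w.count i) = β, b w γ :=
      ContDiff.sum fun w _ => hb_smooth w
    exact ⟨hd.contDiffOn, exists_abs_le_of_isBounded (isBounded_QQn hn) hd.continuous⟩
  have hL : (toWord (natOf α)).length = ∑ i, natOf α i := length_toWord _
  rw [DmultiPi_eq_foldr_toWord, foldr_pderivPi_comp_eq_sum_Dmulti (sph n hn)
    ((contDiff_sph hn).of_le le_top) Metric.isOpen_ball hg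
    (List.ne_nil_of_length_pos (by omega)) (hL.trans_le (sum_natOf_le α)) (sph_mem_Ball hn hγ), hL]
  refine Finset.sum_congr rfl fun β _ => ?_
  split_ifs
  · rw [Complex.real_smul, Finset.mul_sum]
    congr 2
    exact Finset.sum_congr rfl fun w hw => by rw [hb, (Finset.mem_filter.1 hw).2]
  · rfl
end HLTV
end
end

section
/- Let α ∈ {0,1}^n with |α| ≥ 1 and let β ∈ ℕ_0^n be a multi-index with 1 ≤ |β| ≤ |α|. Then there is a constant C, independent of j, such that for every j ∈ ℕ, if the dyadic box B_j has generation m, then ∫_{Q_α(x^{(j)}, y^{(j)})} c_β(γ) dγ_α ≤ C·2^{−m|β|}, where c_β(γ) = Π_{j=2}^{n−1} (sin θ_j)^{max{0, |β| − (α_1 + ⋯ + α_j)}} for γ = (r,θ_2,…,θ_n) ∈ ℚ_n, and the integration over Q_α(x^{(j)},y^{(j)}) is performed only in the variables γ_k with α_k = 1. -/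
noncomputable section

open MeasureTheory Real Set Filter Topology Pointwise
open scoped RealInnerProductSpace ENNReal

namespace HLTV

/-! On the face every coordinate `θ_i` stays in the `i`-th interval of `Q_j`. Writing `r_i ≥ 1`
for the denominators of these intervals (`scale`, with `r_0 = r_1 = 2^m`), the `i`-th interval has
length at most `2π / r_i` and, for `1 ≤ i ≤ n - 2`, `|sin θ_i|` is at most its right endpoint
`≤ 2π r_{i+1} / r_i`. So the integral is at most a constant times
`∏_i (r_{i+1} / r_i)^{α_i + e_i} r_{i+1}^{-α_i}`, where `e_i = |β| - (α_0 + ⋯ + α_i)` is the exponent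
of `sin θ_i` (coordinates indexed from `0`). Since `e_i ≤ e_{i+1} + α_{i+1}`, this product
telescopes to at most `r_0^{-(α_0 + e_0)} ≤ 2^{-m|β|}`. -/

theorem prod_range_div_pow_mul_inv_pow_le {r : ℕ → ℝ} (hr : ∀ i, 1 ≤ r i) {c a : ℕ → ℕ}
    (hc : ∀ i, c i ≤ c (i + 1) + a i) (N : ℕ) :
    ∏ i ∈ Finset.range N, (r (i + 1) / r i) ^ c i * (r (i + 1))⁻¹ ^ a i ≤
      (r 0)⁻¹ ^ c 0 * r N ^ c N := by
  have hpos : ∀ i, 0 < r i := fun i => one_pos.trans_le (hr i)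
  induction N with
  | zero =>
    rw [Finset.prod_range_zero, ← mul_pow, inv_mul_cancel₀ (hpos 0).ne', one_pow]
  | succ N ih =>
    have := hpos N
    have := hpos (N + 1)
    rw [Finset.prod_range_succ]
    calc _ ≤ (r 0)⁻¹ ^ c 0 * r N ^ c N * ((r (N + 1) / r N) ^ c N * (r (N + 1))⁻¹ ^ a N) := by
          gcongr
      _ = (r 0)⁻¹ ^ c 0 * (r (N + 1) ^ c N * (r (N + 1))⁻¹ ^ a N) := by
          rw [div_pow]
          field_simp
      _ ≤ (r 0)⁻¹ ^ c 0 * r (N + 1) ^ c (N + 1) := by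
          refine mul_le_mul_of_nonneg_left ?_ (pow_nonneg (inv_nonneg.2 (hpos 0).le) _)
          rw [inv_pow, mul_inv_le_iff₀ (pow_pos (hpos _) _), ← pow_add]
          exact pow_le_pow_right₀ (hr _) (hc N)

section Box

variable {n : ℕ} {hn : 2 ≤ n}

theorem coeff_pos (i : Fin n) : 0 < coeff n i := by
  unfold coeff; split <;> positivity

theorem coeff_le_two_pi (i : Fin n) : coeff n i ≤ 2 * π := by
  unfold coeff; split <;> linarith [pi_pos]

theorem den_pos (k : Fin n → ℕ) (i : Fin n) : 0 < den n hn k i := by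
  unfold den; split <;> positivity

theorem lo_nonneg (k : Fin n → ℕ) (i : Fin n) : 0 ≤ lo n hn k i := by
  unfold lo
  split
  · linarith [inv_le_one_of_one_le₀ (one_le_pow₀ (M₀ := ℝ) one_le_two (n := k i))]
  · have := den_pos (hn := hn) k i
    have := coeff_pos i
    positivity

theorem lo_le_hi (k : Fin n → ℕ) (i : Fin n) : lo n hn k i ≤ hi n hn k i := by
  unfold lo hi
  split
  · gcongr <;> norm_num
  · have := den_pos (hn := hn) k i
    have := coeff_pos i
    gcongr
    linarith

theorem hi_nonneg (k : Fin n → ℕ) (i : Fin n) : 0 ≤ hi n hn k i :=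
  (lo_nonneg k i).trans (lo_le_hi k i)

theorem abs_ycorner_sub_xcorner (b : BoxIndex n hn) (i : Fin n) :
    |ycorner b i - xcorner b i| = hi n hn b.k i - lo n hn b.k i := by
  have := lo_le_hi (hn := hn) b.k i
  unfold xcorner ycorner
  split
  · rw [show π - hi n hn b.k i - (π - lo n hn b.k i) = -(hi n hn b.k i - lo n hn b.k i) by ring,
      abs_neg, abs_of_nonneg (by linarith)]
  · exact abs_of_nonneg (by linarith)

theorem abs_sin_le_hi (b : BoxIndex n hn) (i : Fin n) {θ : ℝ}
    (hθ : θ ∈ uIcc (xcorner b i) (ycorner b i)) : |sin θ| ≤ hi n hn b.k i := by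
  have hlo := lo_nonneg (hn := hn) b.k i
  have hle := lo_le_hi (hn := hn) b.k i
  unfold xcorner ycorner at hθ
  split at hθ
  · rw [uIcc_of_ge (by linarith)] at hθ
    rw [← sin_pi_sub]
    refine abs_sin_le_abs.trans ?_
    rw [abs_of_nonneg (by linarith [hθ.2])]
    linarith [hθ.1]
  · rw [uIcc_of_le hle] at hθ
    refine abs_sin_le_abs.trans ?_
    rw [abs_of_nonneg (by linarith [hθ.1])]
    exact hθ.2

end Box

instance isFiniteMeasure_ite {X : Type*} [MeasurableSpace X] {p : Prop} [Decidable p]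
    {μ ν : Measure X} [IsFiniteMeasure μ] [IsFiniteMeasure ν] :
    IsFiniteMeasure (if p then μ else ν) := by
  split <;> infer_instance

section Face

variable {n : ℕ} (α : Fin n → Bool) (x y : Fin n → ℝ)

instance isFiniteMeasure_bdryMeasure : IsFiniteMeasure (bdryMeasure n α x y) := by
  unfold bdryMeasure
  infer_instance

theorem bdryMeasure_real_univ :
    (bdryMeasure n α x y).real univ = ∏ i, |y i - x i| ^ natOf α i := by
  rw [measureReal_def, bdryMeasure, Measure.pi_univ, ENNReal.toReal_prod]
  refine Finset.prod_congr rfl fun i _ => ?_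
  unfold natOf
  split
  · rw [Measure.restrict_apply_univ, Real.volume_Icc, ENNReal.toReal_ofReal (by simp),
      max_sub_min_eq_abs, pow_one]
  · simp

theorem ae_bdryMeasure_mem_uIcc : ∀ᵐ γ ∂bdryMeasure n α x y, ∀ i, γ i ∈ uIcc (x i) (y i) := by
  refine ae_all_iff.2 fun i => Measure.tendsto_eval_ae_ae.eventually ?_
  split
  · exact ae_restrict_mem measurableSet_Icc
  · rw [ae_dirac_eq]
    exact right_mem_uIcc

theorem integral_bdryMeasure_le {f : (Fin n → ℝ) → ℝ} {M : ℝ}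
    (hf : ∀ γ : Fin n → ℝ, (∀ i, γ i ∈ uIcc (x i) (y i)) → |f γ| ≤ M) :
    ∫ γ, f γ ∂bdryMeasure n α x y ≤ M * ∏ i, |y i - x i| ^ natOf α i := by
  rw [← bdryMeasure_real_univ]
  refine (le_abs_self _).trans ?_
  rw [← Real.norm_eq_abs]
  refine norm_integral_le_of_norm_le_const ?_
  filter_upwards [ae_bdryMeasure_mem_uIcc α x y] with γ hγ
  exact hf γ hγ

end Face

/-- Agrees with `den n hn k j` for `1 ≤ j < n`; the values at `0` and `n` are chosen so that every
coordinate `j` has side length at most `2π / scale j` and right endpoint at most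
`2π · scale (j + 1) / scale j`. -/
def scale (n : ℕ) (hn : 2 ≤ n) (k : Fin n → ℕ) (j : ℕ) : ℝ :=
  if j ≤ 1 then 2 ^ k (i0 n hn) else if h : j ≤ n then (k ⟨j - 1, by omega⟩ : ℝ) + 1 else 1

section Scale

variable {n : ℕ} {hn : 2 ≤ n}

theorem one_le_scale (k : Fin n → ℕ) (j : ℕ) : 1 ≤ scale n hn k j := by
  unfold scale
  split
  · exact one_le_pow₀ one_le_two
  · split
    · simp
    · rfl

theorem scale_one (k : Fin n → ℕ) : scale n hn k 1 = scale n hn k 0 := by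
  simp [scale]

theorem den_eq_scale (k : Fin n → ℕ) (i : Fin n) (h0 : i.val ≠ 0) :
    den n hn k i = scale n hn k i := by
  unfold den scale
  split_ifs <;> first | rfl | omega

theorem scale_succ (k : Fin n → ℕ) (i : Fin n) (h0 : i.val ≠ 0) :
    scale n hn k (i + 1) = k i + 1 := by
  unfold scale
  rw [if_neg (by omega), dif_pos (by omega)]
  simp

theorem hi_sub_lo_le (k : Fin n → ℕ) (i : Fin n) :
    hi n hn k i - lo n hn k i ≤ 2 * π / scale n hn k i := by
  have hs := one_le_scale (hn := hn) k i
  unfold hi lo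
  split
  · obtain rfl : i = i0 n hn := Fin.ext ‹_›
    have : scale n hn k (i0 n hn) = 2 ^ k (i0 n hn) := by simp [scale, i0]
    rw [this, div_eq_mul_inv]
    have : 0 ≤ ((2 : ℝ) ^ (k (i0 n hn) + 1))⁻¹ := by positivity
    nlinarith [pi_gt_three, inv_pos.2 (pow_pos (two_pos (α := ℝ)) (k (i0 n hn)))]
  · rw [den_eq_scale k i ‹_›, ← sub_div]
    gcongr
    linarith [coeff_le_two_pi i]

theorem hi_le (k : Fin n → ℕ) (i : Fin n) (h0 : i.val ≠ 0) :
    hi n hn k i ≤ 2 * π * (scale n hn k (i + 1) / scale n hn k i) := by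
  have hs := one_le_scale (hn := hn) k i
  unfold hi
  rw [if_neg h0, den_eq_scale k i h0, scale_succ k i h0, mul_div_assoc]
  gcongr
  exact coeff_le_two_pi i

end Scale

section PartialSum

variable {n : ℕ} (α : Fin n → Bool)

theorem natOf_le_one (i : Fin n) : natOf α i ≤ 1 := by
  unfold natOf; split <;> omega

/-- `α_j` as a function of `j : ℕ`, vanishing for `j ≥ n`. -/
def natOfAt (j : ℕ) : ℕ := ∑ i ∈ Finset.univ.filter (fun i : Fin n => i.val = j), natOf α i

/-- The exponent sum `α_1 + ⋯ + α_{j+1}` of `c_β` (coordinates are indexed from `0`). -/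
def partialSum (j : ℕ) : ℕ := ∑ i ∈ Finset.univ.filter (fun i : Fin n => i.val ≤ j), natOf α i

theorem natOfAt_val (i : Fin n) : natOfAt α i = natOf α i := by
  simp [natOfAt, Fin.val_inj, Finset.filter_eq']

theorem natOfAt_of_le {j : ℕ} (h : n ≤ j) : natOfAt α j = 0 := by
  refine Finset.sum_eq_zero fun i hmem => ?_
  have := (Finset.mem_filter.1 hmem).2
  omega

theorem partialSum_zero : partialSum α 0 = natOfAt α 0 := by
  simp [partialSum, natOfAt]

theorem partialSum_succ (j : ℕ) : partialSum α (j + 1) = partialSum α j + natOfAt α (j + 1) := by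
  unfold partialSum natOfAt
  rw [← Finset.sum_union (Finset.disjoint_filter.2 fun i _ h => by omega), ← Finset.filter_or]
  congr 1
  ext i
  simp only [Finset.mem_filter, Finset.mem_univ, true_and]
  omega

theorem partialSum_of_le {j : ℕ} (h : n ≤ j + 1) : partialSum α j = ∑ i, natOf α i :=
  Finset.sum_congr (Finset.filter_true_of_mem fun i _ => by omega) fun _ _ => rfl

end PartialSum

section Estimate

variable {n : ℕ} {hn : 2 ≤ n} (α : Fin n → Bool)

theorem abs_cbeta_le (b : BoxIndex n hn) (β : Fin n → ℕ) {γ : Fin n → ℝ}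
    (hγ : ∀ i, γ i ∈ uIcc (xcorner b i) (ycorner b i)) :
    |cbeta α β γ| ≤
      ∏ j ∈ Finset.univ.filter (fun j : Fin n => 1 ≤ j.val ∧ j.val ≤ n - 2),
        hi n hn b.k j ^ ((∑ i, β i) - partialSum α j) := by
  unfold cbeta partialSum
  rw [Finset.abs_prod]
  gcongr with j
  rw [abs_pow]
  gcongr
  exact abs_sin_le_hi b j (hγ j)

theorem integral_cbeta_le (b : BoxIndex n hn) (β : Fin n → ℕ) :
    ∫ γ, cbeta α β γ ∂bdryMeasure n α (xcorner b) (ycorner b) ≤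
      ∏ i : Fin n, (hi n hn b.k i - lo n hn b.k i) ^ natOf α i *
        (if 1 ≤ i.val ∧ i.val ≤ n - 2 then hi n hn b.k i ^ ((∑ i, β i) - partialSum α i)
          else 1) := by
  refine (integral_bdryMeasure_le α _ _ fun γ hγ => abs_cbeta_le α b β hγ).trans_eq ?_
  simp_rw [abs_ycorner_sub_xcorner]
  rw [Finset.prod_filter, mul_comm, ← Finset.prod_mul_distrib]

theorem ite_hi_pow_le (k : Fin n → ℕ) {B : ℕ} (hB : B ≤ ∑ i, natOf α i) (i : Fin n) :
    (if 1 ≤ i.val ∧ i.val ≤ n - 2 then hi n hn k i ^ (B - partialSum α i) else 1) ≤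
      (2 * π * (scale n hn k (i + 1) / scale n hn k i)) ^ (B - partialSum α i) := by
  have h2π : 1 ≤ 2 * π := by linarith [pi_gt_three]
  split_ifs with h
  · have := hi_nonneg (hn := hn) k i
    have := one_le_scale (hn := hn) k i
    gcongr
    exact hi_le k i (by omega)
  · rcases Nat.eq_zero_or_pos i.val with h0 | h0
    · rw [h0, zero_add, scale_one, div_self (one_pos.trans_le (one_le_scale k 0)).ne', mul_one]
      exact one_le_pow₀ h2π
    · rw [partialSum_of_le α (by omega), Nat.sub_eq_zero_of_le hB, pow_zero]

theorem face_factor_le (k : Fin n → ℕ) {B : ℕ} (hB : B ≤ ∑ i, natOf α i) (i : Fin n) :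
    (hi n hn k i - lo n hn k i) ^ natOf α i *
        (if 1 ≤ i.val ∧ i.val ≤ n - 2 then hi n hn k i ^ (B - partialSum α i) else 1) ≤
      (2 * π) ^ (B + 1) *
        ((scale n hn k (i + 1) / scale n hn k i) ^ (natOfAt α i + (B - partialSum α i)) *
          (scale n hn k (i + 1))⁻¹ ^ natOfAt α i) := by
  have hs := one_le_scale (hn := hn) k i
  have hs' := one_le_scale (hn := hn) k (i + 1)
  have hlen : hi n hn k i - lo n hn k i ≤
      2 * π * (scale n hn k (i + 1) / scale n hn k i * (scale n hn k (i + 1))⁻¹) := by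
    refine (hi_sub_lo_le k i).trans_eq ?_
    field_simp
  have hlen0 := sub_nonneg.2 (lo_le_hi (hn := hn) k i)
  have hsin0 : 0 ≤ if 1 ≤ i.val ∧ i.val ≤ n - 2 then hi n hn k i ^ (B - partialSum α i) else 1 := by
    split_ifs
    · exact pow_nonneg (hi_nonneg k i) _
    · exact zero_le_one
  rw [natOfAt_val]
  calc _ ≤ (2 * π * (scale n hn k (i + 1) / scale n hn k i * (scale n hn k (i + 1))⁻¹)) ^
          natOf α i * (2 * π * (scale n hn k (i + 1) / scale n hn k i)) ^ (B - partialSum α i) := by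
        gcongr
        exact ite_hi_pow_le α k hB i
    _ = (2 * π) ^ (natOf α i + (B - partialSum α i)) *
        ((scale n hn k (i + 1) / scale n hn k i) ^ (natOf α i + (B - partialSum α i)) *
          (scale n hn k (i + 1))⁻¹ ^ natOf α i) := by ring
    _ ≤ _ := by
        gcongr ?_ * _
        have := natOf_le_one α i
        have := Nat.sub_le B (partialSum α i)
        exact pow_le_pow_right₀ (by linarith [pi_gt_three]) (by omega)

theorem prod_face_le (k : Fin n → ℕ) {B : ℕ} (hB : B ≤ ∑ i, natOf α i) :
    ∏ i : Fin n, (hi n hn k i - lo n hn k i) ^ natOf α i *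
        (if 1 ≤ i.val ∧ i.val ≤ n - 2 then hi n hn k i ^ (B - partialSum α i) else 1) ≤
      (2 * π) ^ ((B + 1) * n) * ((2 : ℝ) ^ (k (i0 n hn) * B))⁻¹ := by
  let c (j : ℕ) : ℕ := natOfAt α j + (B - partialSum α j)
  have hc (j : ℕ) : c j ≤ c (j + 1) + natOfAt α j := by
    have := partialSum_succ α j
    simp only [c]
    omega
  have hc0 : B ≤ c 0 := by
    have := partialSum_zero α
    simp only [c]
    omega
  have hcn : c n = 0 := by
    have := partialSum_of_le α (j := n) (by omega)
    have := natOfAt_of_le α (le_refl n)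
    simp only [c]
    omega
  have hs0 : scale n hn k 0 = 2 ^ k (i0 n hn) := by simp [scale]
  have hinv : ((2 : ℝ) ^ k (i0 n hn))⁻¹ ≤ 1 := inv_le_one_of_one_le₀ (one_le_pow₀ one_le_two)
  calc _ ≤ ∏ i : Fin n, (2 * π) ^ (B + 1) * ((scale n hn k (i + 1) / scale n hn k i) ^ c i *
          (scale n hn k (i + 1))⁻¹ ^ natOfAt α i) := by
        refine Finset.prod_le_prod (fun i _ => ?_) fun i _ => face_factor_le α k hB i
        have := hi_nonneg (hn := hn) k i
        have := sub_nonneg.2 (lo_le_hi (hn := hn) k i)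
        positivity
    _ = (2 * π) ^ ((B + 1) * n) * ∏ j ∈ Finset.range n,
        (scale n hn k (j + 1) / scale n hn k j) ^ c j * (scale n hn k (j + 1))⁻¹ ^ natOfAt α j := by
        rw [Finset.prod_mul_distrib, Finset.prod_const, Finset.card_univ, Fintype.card_fin,
          ← pow_mul, Fin.prod_univ_eq_prod_range (fun j =>
            (scale n hn k (j + 1) / scale n hn k j) ^ c j * (scale n hn k (j + 1))⁻¹ ^ natOfAt α j)]
    _ ≤ (2 * π) ^ ((B + 1) * n) * ((scale n hn k 0)⁻¹ ^ c 0 * scale n hn k n ^ c n) := by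
        gcongr
        exact prod_range_div_pow_mul_inv_pow_le (one_le_scale k) hc n
    _ ≤ (2 * π) ^ ((B + 1) * n) * ((2 : ℝ) ^ (k (i0 n hn) * B))⁻¹ := by
        rw [hcn, pow_zero, mul_one, hs0, pow_mul (2 : ℝ), ← inv_pow (2 ^ k (i0 n hn)) B]
        exact mul_le_mul_of_nonneg_left (pow_le_pow_of_le_one (by positivity) hinv hc0)
          (by positivity)

end Estimate

theorem statement17_general (n : ℕ) (hn : 2 ≤ n) (α : Fin n → Bool)
    (β : Fin n → ℕ) (hβ2 : (∑ i, β i) ≤ ∑ i, natOf α i) :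
    ∃ C : ℝ, ∀ b : BoxIndex n hn,
      ∫ γ, cbeta α β γ ∂(bdryMeasure n α (xcorner b) (ycorner b)) ≤
        C * ((2 : ℝ) ^ (gen b * ∑ i, β i))⁻¹ :=
  ⟨_, fun b => (integral_cbeta_le α b β).trans (prod_face_le α b.k hβ2)⟩

/-- **Lemma (integral of `c_β` over faces of dyadic boxes).**
`∫_{Q_α(x^{(j)},y^{(j)})} c_β dγ_α ≲ 2^{-m|β|}`. -/
theorem statement17 (n : ℕ) (hn : 2 ≤ n) (α : Fin n → Bool) (hα : 1 ≤ ∑ i, natOf α i)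
    (β : Fin n → ℕ) (hβ1 : 1 ≤ ∑ i, β i) (hβ2 : (∑ i, β i) ≤ ∑ i, natOf α i) :
    ∃ C : ℝ, ∀ b : BoxIndex n hn,
      ∫ γ, cbeta α β γ ∂(bdryMeasure n α (xcorner b) (ycorner b)) ≤
        C * ((2 : ℝ) ^ (gen b * ∑ i, β i))⁻¹ :=
  statement17_general n hn α β hβ2

end HLTV
end
end

section
/- Let λ > −1, n ≥ 2, and let f : [1,∞) → ℝ be a continuous function with inf_{x ≥ 1} f(x) x^λ > 0. Define g : [1,∞) → [0,∞) by g(x) = ∫_1^x f(y) y^{λ−1} dy and ψ : (0,1) → ℂ by ψ(r) = r^{−n+1} (1−r²)^{−λ} f((1−r)^{−1}) exp(iπ g((1−r)^{−1})). Then sup_{m ∈ ℕ_0} sup_{ρ ∈ [1−2^{−m}, 1−2^{−m−1}]} 2^{m(1+λ)} |∫_{1−2^{−m}}^{ρ} r^{n−1} ψ(r) (1−r²)^λ dr| < ∞. -/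
noncomputable section

open MeasureTheory Real Set Filter Topology Pointwise
open scoped RealInnerProductSpace ENNReal

namespace HLTV

/-!
With `u = (1 - r)⁻¹` the integrand is `f(u) e^{iθ(r)}`, where `θ(r) = π g(u)` has derivative
`θ'(r) = π f(u) (1 - r)^{-(1+λ)}`. So the integrand is `p θ' e^{iθ}` for the decreasing amplitude
`p(r) = (1 - r)^{1+λ} / π`, and one integration by parts bounds its integral over `[a, b]` by
`2 p(a)`. On the `m`-th dyadic interval `p(a) = 2^{-m(1+λ)} / π`.
-/

section OscillatoryIntegral

variable {a b : ℝ} {p p' θ θ' : ℝ → ℝ}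

theorem norm_integral_mul_deriv_mul_exp_le (hab : a ≤ b)
    (hp : ∀ x ∈ Icc a b, HasDerivAt p (p' x) x) (hθ : ∀ x ∈ Icc a b, HasDerivAt θ (θ' x) x)
    (hp' : IntervalIntegrable p' volume a b) (hθ' : IntervalIntegrable θ' volume a b) :
    ‖∫ x in a..b, ((p x * θ' x : ℝ) : ℂ) * Complex.exp (θ x * Complex.I)‖ ≤
      |p a| + |p b| + ∫ x in a..b, |p' x| := by
  set e : ℝ → ℂ := fun x => Complex.exp (θ x * Complex.I)
  have norm_e (x : ℝ) : ‖e x‖ = 1 := Complex.norm_exp_ofReal_mul_I _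
  rw [← uIcc_of_le hab] at hp hθ
  have he : ∀ x ∈ uIcc a b, HasDerivAt (fun y => -Complex.I * e y) (θ' x * e x) x := by
    intro x hx
    refine (((hθ x hx).ofReal_comp.mul_const Complex.I).cexp.const_mul (-Complex.I)).congr_deriv ?_
    linear_combination (-(θ' x : ℂ) * e x) * Complex.I_sq
  have hθ'e : IntervalIntegrable (fun x => (θ' x : ℂ) * e x) volume a b :=
    IntervalIntegrable.mul_continuousOn ⟨hθ'.1.ofReal, hθ'.2.ofReal⟩ fun x hx =>
      ((Complex.continuous_ofReal.continuousAt.comp (hθ x hx).continuousAt).mul_const _).cexp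
        |>.continuousWithinAt
  have hparts := intervalIntegral.integral_mul_deriv_eq_deriv_mul
    (fun x hx => (hp x hx).ofReal_comp) he ⟨hp'.1.ofReal, hp'.2.ofReal⟩ hθ'e
  have hrest : ‖∫ x in a..b, (p' x : ℂ) * (-Complex.I * e x)‖ ≤ ∫ x in a..b, |p' x| := by
    refine (intervalIntegral.norm_integral_le_integral_norm hab).trans_eq ?_
    simp [norm_e]
  calc ‖∫ x in a..b, ((p x * θ' x : ℝ) : ℂ) * e x‖
      = ‖(p b : ℂ) * (-Complex.I * e b) - (p a : ℂ) * (-Complex.I * e a)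
          - ∫ x in a..b, (p' x : ℂ) * (-Complex.I * e x)‖ := by
        rw [← hparts]
        congr 1
        refine intervalIntegral.integral_congr fun x _ => ?_
        push_cast
        ring
    _ ≤ |p b| + |p a| + ∫ x in a..b, |p' x| := by
        refine (norm_sub_le _ _).trans (add_le_add ((norm_sub_le _ _).trans_eq ?_) hrest)
        simp [norm_e]
    _ = |p a| + |p b| + ∫ x in a..b, |p' x| := by ring

theorem norm_integral_mul_deriv_mul_exp_le_two_mul (hab : a ≤ b)
    (hp : ∀ x ∈ Icc a b, HasDerivAt p (p' x) x) (hθ : ∀ x ∈ Icc a b, HasDerivAt θ (θ' x) x)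
    (hp' : IntervalIntegrable p' volume a b) (hθ' : IntervalIntegrable θ' volume a b)
    (hp'_nonpos : ∀ x ∈ Icc a b, p' x ≤ 0) (hpb : 0 ≤ p b) :
    ‖∫ x in a..b, ((p x * θ' x : ℝ) : ℂ) * Complex.exp (θ x * Complex.I)‖ ≤ 2 * p a := by
  have hvar : ∫ x in a..b, |p' x| = p a - p b := by
    have hftc := intervalIntegral.integral_eq_sub_of_hasDerivAt
      (fun x hx => hp x (uIcc_of_le hab ▸ hx)) hp'
    rw [intervalIntegral.integral_congr (g := fun x => -p' x) fun x hx =>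
      abs_of_nonpos (hp'_nonpos x (uIcc_of_le hab ▸ hx)), intervalIntegral.integral_neg, hftc]
    ring
  have hpba : p b ≤ p a := by
    have := intervalIntegral.integral_nonneg (μ := volume) hab fun x _ => abs_nonneg (p' x)
    linarith
  have := norm_integral_mul_deriv_mul_exp_le hab hp hθ hp' hθ'
  rw [hvar, abs_of_nonneg hpb, abs_of_nonneg (hpb.trans hpba)] at this
  linarith

end OscillatoryIntegral

/-- Freezing the integrand at its value at `t = 1` to the left of `1` makes it continuous on `ℝ`;
for `0 ≤ r < 1` this is `π g((1 - r)⁻¹)`. -/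
def radialPhase (f : ℝ → ℝ) (l r : ℝ) : ℝ :=
  π * ∫ t in (1 : ℝ)..(1 - r)⁻¹, f (max t 1) * max t 1 ^ (l - 1)

section RadialPhase

variable {f : ℝ → ℝ} {l r : ℝ}

theorem one_le_inv_one_sub (hr0 : 0 ≤ r) (hr1 : r < 1) : 1 ≤ (1 - r)⁻¹ :=
  one_le_inv₀ (by linarith) |>.2 (by linarith)

theorem hasDerivAt_radialPhase (hf : ContinuousOn f (Ici 1)) (hr0 : 0 ≤ r) (hr1 : r < 1) :
    HasDerivAt (radialPhase f l) (π * f (1 - r)⁻¹ / (1 - r) ^ (1 + l)) r := by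
  have hs : 0 < 1 - r := by linarith
  have hmax : Continuous fun t : ℝ => max t 1 := continuous_id.max continuous_const
  have hk : Continuous fun t : ℝ => f (max t 1) * max t 1 ^ (l - 1) :=
    (hf.comp_continuous hmax fun t => le_max_right t 1).mul
      (hmax.rpow_const fun t => Or.inl (by positivity))
  have hu : HasDerivAt (fun r : ℝ => (1 - r)⁻¹) ((1 - r) ^ 2)⁻¹ r := by
    have h := ((hasDerivAt_id r).const_sub 1).inv hs.ne'
    simp only [id, neg_neg, one_div] at h
    exact h
  have hexp : (1 - r)⁻¹ ^ (l - 1) * ((1 - r) ^ 2)⁻¹ = ((1 - r) ^ (1 + l))⁻¹ := by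
    rw [Real.inv_rpow hs.le, ← Real.rpow_natCast, ← mul_inv, ← Real.rpow_add hs]
    ring_nf
  refine (((hk.integral_hasStrictDerivAt 1 _).hasDerivAt.comp r hu).const_mul π).congr_deriv ?_
  rw [max_eq_left (one_le_inv_one_sub hr0 hr1), mul_assoc, hexp]
  ring

theorem continuousOn_radialPhase_deriv (hf : ContinuousOn f (Ici 1)) :
    ContinuousOn (fun r => π * f (1 - r)⁻¹ / (1 - r) ^ (1 + l)) (Ico 0 1) := by
  have hs : ∀ r ∈ Ico (0 : ℝ) 1, 1 - r ≠ 0 := fun r hr => by linarith [hr.2]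
  refine (continuousOn_const.mul (hf.comp ((continuousOn_const.sub continuousOn_id).inv₀ hs)
    fun r hr => one_le_inv_one_sub hr.1 hr.2)).div
    ((continuousOn_const.sub continuousOn_id).rpow_const fun r hr => Or.inl (hs r hr)) ?_
  exact fun r hr => (Real.rpow_pos_of_pos (by linarith [hr.2]) _).ne'

theorem radialPhase_eq (hr0 : 0 ≤ r) (hr1 : r < 1) :
    π * ∫ t in (1 : ℝ)..(1 - r)⁻¹, f t * t ^ (l - 1) = radialPhase f l r := by
  refine congrArg (π * ·) (intervalIntegral.integral_congr fun t ht => ?_)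
  rw [uIcc_of_le (one_le_inv_one_sub hr0 hr1)] at ht
  simp only [max_eq_left ht.1]

end RadialPhase

theorem radial_symbol_integrand_eq (n : ℕ) (l : ℝ) (f : ℝ → ℝ) {r : ℝ} (hr0 : 0 < r)
    (hr1 : r < 1) :
    ((r ^ (n - 1) : ℝ) : ℂ) *
        (((r ^ (n - 1) : ℝ))⁻¹ * ((((1 - r ^ 2 : ℝ) ^ l) : ℝ)⁻¹ * (f ((1 - r)⁻¹) : ℝ)) *
          Complex.exp ((Real.pi : ℂ) *
            ((∫ t in (1 : ℝ)..((1 - r)⁻¹), f t * t ^ (l - 1) : ℝ) : ℂ) * Complex.I)) *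
        (((1 - r ^ 2 : ℝ) ^ l : ℝ) : ℂ) =
      (f (1 - r)⁻¹ : ℂ) * Complex.exp (radialPhase f l r * Complex.I) := by
  have hrn : (r : ℂ) ^ (n - 1) ≠ 0 := by exact_mod_cast (pow_pos hr0 _).ne'
  have hw : (((1 - r ^ 2 : ℝ) ^ l : ℝ) : ℂ) ≠ 0 := by
    exact_mod_cast (Real.rpow_pos_of_pos (by nlinarith) l).ne'
  rw [← radialPhase_eq hr0.le hr1]
  push_cast
  field_simp

section RadialEstimate

variable {f : ℝ → ℝ} {l a b : ℝ}

theorem norm_integral_radial_le (hl : -1 < l) (hf : ContinuousOn f (Ici 1)) (ha : 0 ≤ a)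
    (hab : a ≤ b) (hb : b < 1) :
    ‖∫ r in a..b, (f (1 - r)⁻¹ : ℂ) * Complex.exp (radialPhase f l r * Complex.I)‖ ≤
      2 * ((1 - a) ^ (1 + l) / π) := by
  have hsub : Icc a b ⊆ Ico 0 1 := fun r hr => ⟨ha.trans hr.1, hr.2.trans_lt hb⟩
  have hs : ∀ r ∈ Icc a b, 0 < 1 - r := fun r hr => sub_pos.2 (hsub hr).2
  set p : ℝ → ℝ := fun r => (1 - r) ^ (1 + l) / π
  set p' : ℝ → ℝ := fun r => -((1 + l) * (1 - r) ^ l) / π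
  set θ' : ℝ → ℝ := fun r => π * f (1 - r)⁻¹ / (1 - r) ^ (1 + l)
  have hp : ∀ r ∈ Icc a b, HasDerivAt p (p' r) r := fun r hr => by
    refine (((hasDerivAt_id r).const_sub 1).rpow_const (Or.inl (hs r hr).ne')).div_const π
      |>.congr_deriv ?_
    simp only [id, p', add_sub_cancel_left]
    ring
  have hp' : ContinuousOn p' (Icc a b) :=
    ((continuousOn_const.mul ((continuousOn_const.sub continuousOn_id).rpow_const
      fun r hr => Or.inl (hs r hr).ne')).neg).div_const π
  have hp'_nonpos : ∀ r ∈ Icc a b, p' r ≤ 0 := fun r hr =>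
    div_nonpos_of_nonpos_of_nonneg
      (neg_nonpos.2 (mul_nonneg (by linarith) (Real.rpow_nonneg (hs r hr).le _))) pi_pos.le
  have hpθ' : ∀ r ∈ uIcc a b, f (1 - r)⁻¹ = p r * θ' r := fun r hr => by
    have : (1 - r) ^ (1 + l) ≠ 0 := (Real.rpow_pos_of_pos (hs r (uIcc_of_le hab ▸ hr)) _).ne'
    simp only [p, θ']
    field_simp
  calc _ = ‖∫ r in a..b, ((p r * θ' r : ℝ) : ℂ) *
          Complex.exp (radialPhase f l r * Complex.I)‖ := by
        congr 1
        exact intervalIntegral.integral_congr fun r hr => by rw [hpθ' r hr]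
    _ ≤ 2 * p a := norm_integral_mul_deriv_mul_exp_le_two_mul hab hp
        (fun r hr => hasDerivAt_radialPhase hf (hsub hr).1 (hsub hr).2)
        (hp'.intervalIntegrable_of_Icc hab)
        (((continuousOn_radialPhase_deriv hf).mono hsub).intervalIntegrable_of_Icc hab)
        hp'_nonpos (div_nonneg (Real.rpow_nonneg (hs b ⟨hab, le_rfl⟩).le _) pi_pos.le)

end RadialEstimate

theorem statement19_general (n : ℕ) (l : ℝ) (hl : -1 < l)
    (f : ℝ → ℝ) (hf : ContinuousOn f (Ici 1)) :
    ∃ M : ℝ,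
      ∀ m : ℕ, ∀ ρ ∈ Icc (1 - ((2 : ℝ) ^ m)⁻¹) (1 - ((2 : ℝ) ^ (m + 1))⁻¹),
        (2 : ℝ) ^ ((m : ℝ) * (1 + l)) *
          ‖∫ r in (1 - ((2 : ℝ) ^ m)⁻¹)..ρ,
              ((r ^ (n - 1) : ℝ) : ℂ) *
                (((r ^ (n - 1) : ℝ))⁻¹ * ((((1 - r ^ 2 : ℝ) ^ l) : ℝ)⁻¹ *
                    (f ((1 - r)⁻¹) : ℝ)) *
                  Complex.exp ((Real.pi : ℂ) *
                    ((∫ t in (1 : ℝ)..((1 - r)⁻¹), f t * t ^ (l - 1) : ℝ) : ℂ) *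
                    Complex.I)) *
                (((1 - r ^ 2 : ℝ) ^ l : ℝ) : ℂ)‖ ≤ M := by
  refine ⟨2 / π, fun m ρ ⟨haρ, hρb⟩ => ?_⟩
  set a : ℝ := 1 - ((2 : ℝ) ^ m)⁻¹ with ha
  have ha0 : 0 ≤ a := sub_nonneg.2 (inv_le_one_of_one_le₀ (one_le_pow₀ one_le_two))
  have hρ1 : ρ < 1 := hρb.trans_lt (sub_lt_self _ (by positivity))
  have hscale : (2 : ℝ) ^ ((m : ℝ) * (1 + l)) * (1 - a) ^ (1 + l) = 1 := by
    rw [ha, sub_sub_cancel, Real.inv_rpow (by positivity), ← Real.rpow_natCast,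
      ← Real.rpow_mul zero_le_two, mul_inv_cancel₀ (by positivity)]
  rw [intervalIntegral.integral_congr_uIoo fun r hr =>
    radial_symbol_integrand_eq n l f (ha0.trans_lt (uIoo_of_le haρ ▸ hr).1)
      ((uIoo_of_le haρ ▸ hr).2.trans hρ1)]
  calc _ ≤ (2 : ℝ) ^ ((m : ℝ) * (1 + l)) * (2 * ((1 - a) ^ (1 + l) / π)) := by
        gcongr
        exact norm_integral_radial_le hl hf ha0 haρ hρ1
    _ = 2 / π := by rw [mul_left_comm, ← mul_div_assoc, hscale, mul_one_div]

/-- **Example (radial oscillating symbols).** For any continuous `f : [1,∞) → ℝ` with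
`inf f(x)x^λ > 0`, the radial symbol
`ψ(r) = r^{-n+1}(1-r²)^{-λ} f((1-r)^{-1}) exp(iπ g((1-r)^{-1}))`, where
`g(x) = ∫_1^x f(y) y^{λ-1} dy`, satisfies the weak Carleson condition (9.new). -/
theorem statement19 (n : ℕ) (hn : 2 ≤ n) (l : ℝ) (hl : -1 < l)
    (f : ℝ → ℝ) (hf : ContinuousOn f (Ici 1))
    (hpos : ∃ ε : ℝ, 0 < ε ∧ ∀ x : ℝ, 1 ≤ x → ε ≤ f x * x ^ l) :
    ∃ M : ℝ,
      ∀ m : ℕ, ∀ ρ ∈ Icc (1 - ((2 : ℝ) ^ m)⁻¹) (1 - ((2 : ℝ) ^ (m + 1))⁻¹),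
        (2 : ℝ) ^ ((m : ℝ) * (1 + l)) *
          ‖∫ r in (1 - ((2 : ℝ) ^ m)⁻¹)..ρ,
              ((r ^ (n - 1) : ℝ) : ℂ) *
                (((r ^ (n - 1) : ℝ))⁻¹ * ((((1 - r ^ 2 : ℝ) ^ l) : ℝ)⁻¹ *
                    (f ((1 - r)⁻¹) : ℝ)) *
                  Complex.exp ((Real.pi : ℂ) *
                    ((∫ t in (1 : ℝ)..((1 - r)⁻¹), f t * t ^ (l - 1) : ℝ) : ℂ) *
                    Complex.I)) *
                (((1 - r ^ 2 : ℝ) ^ l : ℝ) : ℂ)‖ ≤ M :=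
  statement19_general n l hl f hf

end HLTV
end
end
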